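/- arXiv:2404.04553 — 7 statements merged into one kernel-verified Lean document; each statement's English description precedes it below -/
import Mathlib

section
/- Let A = A0 + A1ε ∈ DQ^{n×k}, B = B0 + B1ε ∈ DQ^{l×m}, C = C0 + C1ε ∈ DQ^{n×m} be dual quaternion matrices. Set A11 = A1·L_{A0}, A2 = R_{A0}·A11, C3 = −R_{A0}·C0, B2 = R_{B0}·B1, A4 = R_{A2}·R_{A0}, C4 = A4·(A1·A0†·C0 + C0·B0†·B1 − C1), B3 = B2·L_{B0}, B4 = C4·L_{B0}. Then the dual quaternion matrix equation AX − YB = C has a solution X ∈ DQ^{k×m}, Y ∈ DQ^{n×l} if and only if C3·L_{B0} = 0 and B4·L_{B3} = 0. -/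
open Matrix

/-- Quaternion matrices of size `p × q`. -/
abbrev QM (p q : ℕ) := Matrix (Fin p) (Fin q) (Quaternion ℝ)

/-- `Ad` is a Moore–Penrose inverse of the quaternion matrix `A`. -/
def IsMP {p q : ℕ} (A : QM p q) (Ad : QM q p) : Prop :=
  A * Ad * A = A ∧ Ad * A * Ad = Ad ∧ (A * Ad)ᴴ = A * Ad ∧ (Ad * A)ᴴ = Ad * A

/-- The dual quaternion matrix `A0 + A1 ε`, realized as a matrix over the
dual numbers (dual quaternions) `DualNumber (Quaternion ℝ)`. -/
noncomputable def dm {p q : ℕ} (A0 A1 : QM p q) :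
    Matrix (Fin p) (Fin q) (DualNumber (Quaternion ℝ)) :=
  A0.map TrivSqZeroExt.inl + A1.map TrivSqZeroExt.inr

/-- The rank of a quaternion matrix: the dimension (over `ℍ`) of the left
`ℍ`-submodule spanned by its rows. -/
noncomputable def qrank {m n : Type*} (A : Matrix m n (Quaternion ℝ)) : ℕ :=
  Module.finrank (Quaternion ℝ)
    (Submodule.span (Quaternion ℝ) (Set.range (fun i : m => fun j : n => A i j)))

/-!
Writing `X = X0 + X1 ε` and `Y = Y0 + Y1 ε`, the dual equation splits into the coupled quaternion
equations `A0 X0 - Y0 B0 = C0` and `A0 X1 - Y1 B0 = C1 - A1 X0 + Y0 B1`. By the Baksalary–Kala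
criterion (`A X - Y B = C` is solvable iff `R_A C L_B = 0`), the first is solvable iff
`R_{A0} C0 L_{B0} = 0`, and for fixed `X0, Y0` the second is solvable iff the residual
`R_{A0} (C1 - A1 X0 + Y0 B1) L_{B0}` vanishes. For a solution of the first equation this residual
equals `R_{A0} Y0 B3 - A2 X0 L_{B0} - T` with `T = R_{A0} (A1 A0† C0 + C0 B0† B1 - C1) L_{B0}`,
so it can be made to vanish iff `T` lies in `{V B3 - A2 U}`, which is Baksalary–Kala once more:
`R_{A2} T L_{B3} = 0`, i.e. `B4 L_{B3} = 0`. The witnesses `X0 = A0† C0 - L_{A0} A2† T` and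
`Y0 = -R_{A0} C0 B0† + R_{A2} T B3† R_{B0}` realise it.
-/

namespace Matrix
variable {R : Type*} [Ring R] {l m n : Type*} [Fintype m]

theorem map_fst_mul (X : Matrix l m (DualNumber R)) (Y : Matrix m n (DualNumber R)) :
    (X * Y).map TrivSqZeroExt.fst = X.map TrivSqZeroExt.fst * Y.map TrivSqZeroExt.fst := by
  ext i j
  simp [Matrix.mul_apply, TrivSqZeroExt.fst_sum]

theorem map_snd_mul (X : Matrix l m (DualNumber R)) (Y : Matrix m n (DualNumber R)) :
    (X * Y).map TrivSqZeroExt.snd = X.map TrivSqZeroExt.fst * Y.map TrivSqZeroExt.snd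
      + X.map TrivSqZeroExt.snd * Y.map TrivSqZeroExt.fst := by
  ext i j
  simp [Matrix.mul_apply, TrivSqZeroExt.snd_sum, Finset.sum_add_distrib]

end Matrix

lemma dm_eq_iff {p q : ℕ} {A0 A1 : QM p q}
    {X : Matrix (Fin p) (Fin q) (DualNumber (Quaternion ℝ))} :
    X = dm A0 A1 ↔ X.map TrivSqZeroExt.fst = A0 ∧ X.map TrivSqZeroExt.snd = A1 := by
  simp only [dm, ← Matrix.ext_iff, TrivSqZeroExt.ext_iff]
  simp [forall_and]

lemma map_fst_dm {p q : ℕ} (A0 A1 : QM p q) : (dm A0 A1).map TrivSqZeroExt.fst = A0 :=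
  (dm_eq_iff.1 rfl).1

lemma map_snd_dm {p q : ℕ} (A0 A1 : QM p q) : (dm A0 A1).map TrivSqZeroExt.snd = A1 :=
  (dm_eq_iff.1 rfl).2

lemma exists_dm_sub_eq_dm_iff {n k l m : ℕ} (A0 A1 : QM n k) (B0 B1 : QM l m) (C0 C1 : QM n m) :
    (∃ (X : Matrix (Fin k) (Fin m) (DualNumber (Quaternion ℝ)))
       (Y : Matrix (Fin n) (Fin l) (DualNumber (Quaternion ℝ))),
        dm A0 A1 * X - Y * dm B0 B1 = dm C0 C1) ↔
      ∃ (X0 X1 : QM k m) (Y0 Y1 : QM n l),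
        A0 * X0 - Y0 * B0 = C0 ∧ A0 * X1 + A1 * X0 - (Y0 * B1 + Y1 * B0) = C1 := by
  simp only [dm_eq_iff, Matrix.map_sub _ TrivSqZeroExt.fst_sub,
    Matrix.map_sub _ TrivSqZeroExt.snd_sub, Matrix.map_fst_mul, Matrix.map_snd_mul, map_fst_dm,
    map_snd_dm]
  constructor
  · rintro ⟨X, Y, h0, h1⟩
    exact ⟨_, _, _, _, h0, h1⟩
  · rintro ⟨X0, X1, Y0, Y1, h0, h1⟩
    exact ⟨dm X0 X1, dm Y0 Y1, by simpa only [map_fst_dm, map_snd_dm] using ⟨h0, h1⟩⟩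

section InnerInverse
variable {R : Type*} [Ring R] {m n p q : ℕ}
  {A : Matrix (Fin m) (Fin n) R} {G : Matrix (Fin n) (Fin m) R}

theorem one_sub_mul_mul_cancel (h : A * G * A = A) : (1 - A * G) * A = 0 := by
  rw [Matrix.sub_mul, Matrix.one_mul, h, sub_self]

theorem mul_one_sub_mul_cancel (h : A * G * A = A) : A * (1 - G * A) = 0 := by
  rw [Matrix.mul_sub, Matrix.mul_one, ← Matrix.mul_assoc, h, sub_self]

theorem isIdempotentElem_one_sub_mul (h : A * G * A = A) : IsIdempotentElem (1 - A * G) :=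
  IsIdempotentElem.one_sub (by rw [IsIdempotentElem, ← Matrix.mul_assoc, h])

theorem isIdempotentElem_one_sub_mul' (h : A * G * A = A) : IsIdempotentElem (1 - G * A) :=
  IsIdempotentElem.one_sub (by rw [IsIdempotentElem, Matrix.mul_assoc, ← Matrix.mul_assoc A, h])

theorem mul_mul_mul_cancel_left (h : A * G * A = A) {e : ℕ} (M : Matrix (Fin n) (Fin e) R) :
    A * (G * (A * M)) = A * M := by
  rw [← Matrix.mul_assoc G, ← Matrix.mul_assoc A (G * A), ← Matrix.mul_assoc, h]

theorem mul_mul_eq_of_mul_eq {X : Matrix (Fin m) (Fin n) R} {Y : Matrix (Fin n) (Fin p) R}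
    {Z : Matrix (Fin m) (Fin p) R} (h : X * Y = Z) (M : Matrix (Fin p) (Fin q) R) :
    X * (Y * M) = Z * M := by
  rw [← Matrix.mul_assoc, h]

theorem mul_one_sub_mul_comm (A : Matrix (Fin m) (Fin n) R) (G : Matrix (Fin n) (Fin m) R) :
    G * (1 - A * G) = (1 - G * A) * G := by
  rw [Matrix.mul_sub, Matrix.sub_mul, Matrix.mul_one, Matrix.one_mul, Matrix.mul_assoc]

variable {B : Matrix (Fin p) (Fin q) R} {H : Matrix (Fin q) (Fin p) R}

theorem mul_sub_mul_eq_of_consistent (hA : A * G * A = A) (hB : B * H * B = B)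
    {C : Matrix (Fin m) (Fin q) R} (hC : (1 - A * G) * C * (1 - H * B) = 0)
    (U : Matrix (Fin n) (Fin q) R) (V : Matrix (Fin m) (Fin p) R) :
    A * (G * C + (1 - G * A) * U) - (-((1 - A * G) * C * H) + V * (1 - B * H)) * B = C := by
  have hCH : (1 - A * G) * C * H * B = (1 - A * G) * C := by
    rwa [Matrix.mul_sub, Matrix.mul_one, sub_eq_zero, eq_comm, ← Matrix.mul_assoc] at hC
  rw [Matrix.mul_add, ← Matrix.mul_assoc A (1 - G * A), mul_one_sub_mul_cancel hA,
    Matrix.zero_mul, add_zero, Matrix.add_mul, Matrix.mul_assoc V, one_sub_mul_mul_cancel hB,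
    Matrix.mul_zero, add_zero, Matrix.neg_mul, hCH, sub_neg_eq_add, ← Matrix.mul_assoc,
    ← Matrix.add_mul, add_sub_cancel, Matrix.one_mul]

theorem exists_mul_sub_mul_eq_iff (hA : A * G * A = A) (hB : B * H * B = B)
    (C : Matrix (Fin m) (Fin q) R) :
    (∃ (X : Matrix (Fin n) (Fin q) R) (Y : Matrix (Fin m) (Fin p) R), A * X - Y * B = C) ↔
      (1 - A * G) * C * (1 - H * B) = 0 := by
  constructor
  · rintro ⟨X, Y, rfl⟩
    rw [Matrix.mul_sub (1 - A * G), ← Matrix.mul_assoc (1 - A * G) A, one_sub_mul_mul_cancel hA,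
      Matrix.zero_mul, zero_sub, Matrix.neg_mul, Matrix.mul_assoc _ (Y * B), Matrix.mul_assoc Y,
      mul_one_sub_mul_cancel hB, Matrix.mul_zero, Matrix.mul_zero, neg_zero]
  · exact fun hC => ⟨_, _, mul_sub_mul_eq_of_consistent hA hB hC 0 0⟩

end InnerInverse

section CoupledSystem
variable {R : Type*} [Ring R] {n k l m : ℕ}
  {A0 A1 A2 : Matrix (Fin n) (Fin k) R} {A0d A2d : Matrix (Fin k) (Fin n) R}
  {B0 B1 B3 : Matrix (Fin l) (Fin m) R} {B0d B3d : Matrix (Fin m) (Fin l) R}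
  {C0 C1 : Matrix (Fin n) (Fin m) R}

theorem exists_coupled_iff_exists_residual_eq_zero (hA0 : A0 * A0d * A0 = A0)
    (hB0 : B0 * B0d * B0 = B0) :
    (∃ (X0 X1 : Matrix (Fin k) (Fin m) R) (Y0 Y1 : Matrix (Fin n) (Fin l) R),
        A0 * X0 - Y0 * B0 = C0 ∧ A0 * X1 + A1 * X0 - (Y0 * B1 + Y1 * B0) = C1) ↔
      ∃ (X0 : Matrix (Fin k) (Fin m) R) (Y0 : Matrix (Fin n) (Fin l) R),
        A0 * X0 - Y0 * B0 = C0 ∧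
        (1 - A0 * A0d) * (C1 - A1 * X0 + Y0 * B1) * (1 - B0d * B0) = 0 := by
  refine exists_congr fun X0 =>
    ⟨fun ⟨X1, Y0, Y1, h0, h1⟩ => ⟨Y0, h0, ?_⟩, fun ⟨Y0, h0, h1⟩ => ?_⟩
  · rw [← exists_mul_sub_mul_eq_iff hA0 hB0]
    exact ⟨X1, Y1, by rw [← h1]; abel⟩
  · obtain ⟨X1, Y1, h⟩ := (exists_mul_sub_mul_eq_iff hA0 hB0 _).2 h1
    exact ⟨X1, Y0, Y1, h0, by rw [← sub_eq_zero, ← sub_eq_zero.2 h]; abel⟩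

theorem coupled_residual_eq (hA0 : A0 * A0d * A0 = A0) (hB0 : B0 * B0d * B0 = B0)
    (hA2 : A2 = (1 - A0 * A0d) * (A1 * (1 - A0d * A0)))
    (hB3 : B3 = (1 - B0 * B0d) * B1 * (1 - B0d * B0))
    {X0 : Matrix (Fin k) (Fin m) R} {Y0 : Matrix (Fin n) (Fin l) R}
    (h : A0 * X0 - Y0 * B0 = C0) :
    (1 - A0 * A0d) * (C1 - A1 * X0 + Y0 * B1) * (1 - B0d * B0) =
      (1 - A0 * A0d) * Y0 * B3 - A2 * X0 * (1 - B0d * B0)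
        - (1 - A0 * A0d) * (A1 * A0d * C0 + C0 * B0d * B1 - C1) * (1 - B0d * B0) := by
  subst hA2 hB3 h
  simp only [Matrix.mul_add, Matrix.add_mul, Matrix.mul_sub, Matrix.sub_mul,
    Matrix.mul_one, Matrix.one_mul, Matrix.mul_assoc, mul_mul_mul_cancel_left hA0,
    (Matrix.mul_assoc _ _ _).symm.trans hB0]
  abel

theorem conditions_of_residual_eq_zero (hA0 : A0 * A0d * A0 = A0)
    (hB0 : B0 * B0d * B0 = B0) (hA2 : A2 = (1 - A0 * A0d) * (A1 * (1 - A0d * A0)))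
    (hA2d : A2 * A2d * A2 = A2) (hB3 : B3 = (1 - B0 * B0d) * B1 * (1 - B0d * B0))
    (hB3d : B3 * B3d * B3 = B3)
    {X0 : Matrix (Fin k) (Fin m) R} {Y0 : Matrix (Fin n) (Fin l) R}
    (h0 : A0 * X0 - Y0 * B0 = C0)
    (h1 : (1 - A0 * A0d) * (C1 - A1 * X0 + Y0 * B1) * (1 - B0d * B0) = 0) :
    (1 - A0 * A0d) * C0 * (1 - B0d * B0) = 0 ∧
      (1 - A2 * A2d) * ((1 - A0 * A0d) * (A1 * A0d * C0 + C0 * B0d * B1 - C1) * (1 - B0d * B0))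
        * (1 - B3d * B3) = 0 := by
  refine ⟨(exists_mul_sub_mul_eq_iff hA0 hB0 C0).1 ⟨X0, Y0, h0⟩, ?_⟩
  rw [coupled_residual_eq hA0 hB0 hA2 hB3 h0, sub_eq_zero, eq_comm] at h1
  rw [h1, ← neg_sub (A2 * X0 * (1 - B0d * B0)), Matrix.mul_neg, Matrix.neg_mul, neg_eq_zero,
    ← exists_mul_sub_mul_eq_iff hA2d hB3d]
  exact ⟨X0 * (1 - B0d * B0), (1 - A0 * A0d) * Y0, by simp only [Matrix.mul_assoc]⟩

theorem mul_particular_Y0_mul_B3_eq_zero (hA0 : A0 * A0d * A0 = A0)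
    (hB3 : B3 = (1 - B0 * B0d) * B1 * (1 - B0d * B0))
    (hC0 : (1 - A0 * A0d) * C0 * (1 - B0d * B0) = 0) :
    (1 - A0 * A0d) * ((1 - A0 * A0d) * C0 * B0d) * B3 = 0 := calc
  _ = (1 - A0 * A0d) * C0 * (1 - B0d * B0) * (B0d * (B1 * (1 - B0d * B0))) := by
    rw [hB3]
    simp only [Matrix.mul_assoc, mul_mul_eq_of_mul_eq (isIdempotentElem_one_sub_mul hA0).eq,
      mul_mul_eq_of_mul_eq (mul_one_sub_mul_comm B0 B0d)]
  _ = 0 := by rw [hC0, Matrix.zero_mul]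

theorem A2_mul_particular_X0_mul_eq_zero (hA2 : A2 = (1 - A0 * A0d) * (A1 * (1 - A0d * A0)))
    (hC0 : (1 - A0 * A0d) * C0 * (1 - B0d * B0) = 0) :
    A2 * (A0d * C0) * (1 - B0d * B0) = 0 := calc
  _ = (1 - A0 * A0d) * (A1 * A0d) * ((1 - A0 * A0d) * C0 * (1 - B0d * B0)) := by
    rw [hA2]
    simp only [Matrix.mul_assoc, mul_mul_eq_of_mul_eq (mul_one_sub_mul_comm A0 A0d).symm]
  _ = 0 := by rw [hC0, Matrix.mul_zero]

theorem exists_residual_eq_zero_of_conditions (hA0 : A0 * A0d * A0 = A0)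
    (hB0 : B0 * B0d * B0 = B0) (hA2 : A2 = (1 - A0 * A0d) * (A1 * (1 - A0d * A0)))
    (hB3 : B3 = (1 - B0 * B0d) * B1 * (1 - B0d * B0))
    (hC0 : (1 - A0 * A0d) * C0 * (1 - B0d * B0) = 0)
    (hT : (1 - A2 * A2d) * ((1 - A0 * A0d) * (A1 * A0d * C0 + C0 * B0d * B1 - C1)
      * (1 - B0d * B0)) * (1 - B3d * B3) = 0) :
    ∃ (X0 : Matrix (Fin k) (Fin m) R) (Y0 : Matrix (Fin n) (Fin l) R),
      A0 * X0 - Y0 * B0 = C0 ∧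
      (1 - A0 * A0d) * (C1 - A1 * X0 + Y0 * B1) * (1 - B0d * B0) = 0 := by
  generalize hTdef : (1 - A0 * A0d) * (A1 * A0d * C0 + C0 * B0d * B1 - C1) * (1 - B0d * B0) = T
    at hT
  have hsol := mul_sub_mul_eq_of_consistent hA0 hB0 hC0 (-(A2d * T)) ((1 - A2 * A2d) * T * B3d)
  refine ⟨_, _, hsol, ?_⟩
  rw [coupled_residual_eq hA0 hB0 hA2 hB3 hsol, hTdef, sub_eq_zero]
  have hPP := (isIdempotentElem_one_sub_mul hA0).eq
  have hQQ := (isIdempotentElem_one_sub_mul' hB0).eq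
  have hPT : (1 - A0 * A0d) * T = T := by
    rw [← hTdef, ← Matrix.mul_assoc, ← Matrix.mul_assoc, hPP]
  have hTQ : T * (1 - B0d * B0) = T := by rw [← hTdef, Matrix.mul_assoc, hQQ]
  have hA2L : A2 * (1 - A0d * A0) = A2 := by
    rw [hA2, Matrix.mul_assoc, Matrix.mul_assoc, (isIdempotentElem_one_sub_mul' hA0).eq]
  have hRB3 : (1 - B0 * B0d) * B3 = B3 := by
    rw [hB3, ← Matrix.mul_assoc, ← Matrix.mul_assoc, (isIdempotentElem_one_sub_mul hB0).eq]
  have hpartY := mul_particular_Y0_mul_B3_eq_zero hA0 hB3 hC0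
  have hpartX := A2_mul_particular_X0_mul_eq_zero hA2 hC0
  have hTB3 : (1 - A2 * A2d) * (T * (B3d * B3)) = (1 - A2 * A2d) * T := by
    rwa [Matrix.mul_sub, Matrix.mul_one, sub_eq_zero, eq_comm, Matrix.mul_assoc] at hT
  generalize 1 - A0 * A0d = P at *
  generalize 1 - B0d * B0 = Q at *
  have hPA2 : P * A2 = A2 := by rw [hA2, ← Matrix.mul_assoc, hPP]
  have hY0 : P * (-(P * C0 * B0d) + (1 - A2 * A2d) * T * B3d * (1 - B0 * B0d)) * B3
      = (1 - A2 * A2d) * T := by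
    have hPR2T : P * ((1 - A2 * A2d) * T) = (1 - A2 * A2d) * T := by
      rw [Matrix.sub_mul, Matrix.one_mul, Matrix.mul_sub, hPT, Matrix.mul_assoc A2,
        ← Matrix.mul_assoc P A2, hPA2]
    rw [Matrix.mul_add, Matrix.add_mul, Matrix.mul_neg, Matrix.neg_mul, hpartY, neg_zero, zero_add]
    simp only [Matrix.mul_assoc, hRB3, hTB3, hPR2T]
  have hX0 : A2 * (A0d * C0 + (1 - A0d * A0) * -(A2d * T)) * Q = -(A2 * A2d * T) := by
    rw [Matrix.mul_add, Matrix.add_mul, hpartX, zero_add, ← Matrix.mul_assoc A2, hA2L,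
      Matrix.mul_neg, Matrix.neg_mul, Matrix.mul_assoc, Matrix.mul_assoc, hTQ, Matrix.mul_assoc]
  rw [hY0, hX0, sub_neg_eq_add, Matrix.sub_mul, Matrix.one_mul, sub_add_cancel]

theorem exists_coupled_iff_conditions (hA0 : A0 * A0d * A0 = A0) (hB0 : B0 * B0d * B0 = B0)
    (hA2 : A2 = (1 - A0 * A0d) * (A1 * (1 - A0d * A0))) (hA2d : A2 * A2d * A2 = A2)
    (hB3 : B3 = (1 - B0 * B0d) * B1 * (1 - B0d * B0)) (hB3d : B3 * B3d * B3 = B3) :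
    (∃ (X0 X1 : Matrix (Fin k) (Fin m) R) (Y0 Y1 : Matrix (Fin n) (Fin l) R),
        A0 * X0 - Y0 * B0 = C0 ∧ A0 * X1 + A1 * X0 - (Y0 * B1 + Y1 * B0) = C1) ↔
      (1 - A0 * A0d) * C0 * (1 - B0d * B0) = 0 ∧
        (1 - A2 * A2d) * ((1 - A0 * A0d) * (A1 * A0d * C0 + C0 * B0d * B1 - C1) * (1 - B0d * B0))
          * (1 - B3d * B3) = 0 := by
  rw [exists_coupled_iff_exists_residual_eq_zero hA0 hB0]
  constructor
  · rintro ⟨X0, Y0, h0, h1⟩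
    exact conditions_of_residual_eq_zero hA0 hB0 hA2 hA2d hB3 hB3d h0 h1
  · rintro ⟨hC0, hT⟩
    exact exists_residual_eq_zero_of_conditions hA0 hB0 hA2 hB3 hC0 hT

end CoupledSystem

/-- solvability of the dual quaternion matrix equation
`A X - Y B = C` in terms of `C3 L_{B0} = 0` and `B4 L_{B3} = 0`. -/
theorem stmt1 {n k l m : ℕ}
    (A0 A1 : QM n k) (B0 B1 : QM l m) (C0 C1 : QM n m)
    (A0d : QM k n) (hA0d : IsMP A0 A0d)
    (B0d : QM m l) (hB0d : IsMP B0 B0d)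
    (A11 : QM n k) (hA11 : A11 = A1 * (1 - A0d * A0))
    (A2 : QM n k) (hA2 : A2 = (1 - A0 * A0d) * A11)
    (A2d : QM k n) (hA2d : IsMP A2 A2d)
    (C3 : QM n m) (hC3 : C3 = -((1 - A0 * A0d) * C0))
    (B2 : QM l m) (hB2 : B2 = (1 - B0 * B0d) * B1)
    (A4 : QM n n) (hA4 : A4 = (1 - A2 * A2d) * (1 - A0 * A0d))
    (C4 : QM n m) (hC4 : C4 = A4 * (A1 * A0d * C0 + C0 * B0d * B1 - C1))
    (B3 : QM l m) (hB3 : B3 = B2 * (1 - B0d * B0))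
    (B3d : QM m l) (hB3d : IsMP B3 B3d)
    (B4 : QM n m) (hB4 : B4 = C4 * (1 - B0d * B0)) :
    (∃ (X : Matrix (Fin k) (Fin m) (DualNumber (Quaternion ℝ)))
       (Y : Matrix (Fin n) (Fin l) (DualNumber (Quaternion ℝ))),
        dm A0 A1 * X - Y * dm B0 B1 = dm C0 C1) ↔
      (C3 * (1 - B0d * B0) = 0 ∧ B4 * (1 - B3d * B3) = 0) := by
  have hA2' : A2 = (1 - A0 * A0d) * (A1 * (1 - A0d * A0)) := by rw [hA2, hA11]
  have hB3' : B3 = (1 - B0 * B0d) * B1 * (1 - B0d * B0) := by rw [hB3, hB2]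
  have hB4' : B4 = (1 - A2 * A2d) *
      ((1 - A0 * A0d) * (A1 * A0d * C0 + C0 * B0d * B1 - C1) * (1 - B0d * B0)) := by
    rw [hB4, hC4, hA4]
    simp only [Matrix.mul_assoc]
  rw [exists_dm_sub_eq_dm_iff, exists_coupled_iff_conditions hA0d.1 hB0d.1 hA2' hA2d.1 hB3' hB3d.1,
    hC3, Matrix.neg_mul, neg_eq_zero, hB4']
end

section
/- Let A0 be an n×k quaternion matrix, B0 an l×m quaternion matrix, and C0 an n×m quaternion matrix, and set C3 = −R_{A0}·C0. Then C3·L_{B0} = 0 if and only if r[B0 0; −C0 A0] = r(B0) + r(A0), where [B0 0; −C0 A0] is the (l+n)×(m+k) block matrix with blocks B0, 0, −C0, A0. -/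
/-!
Marsaglia–Styan: if `B B⁻ B = B` and `A A⁻ A = A`, then
`r [B 0; C A] = r B + r A + r (R_A C L_B)`. Unit block-triangular row and column operations
replace `C` by `D = R_A C L_B`. Since `A A⁻ D = 0` and `D B⁻ B = 0`, left multiplication by a
left-invertible matrix and right multiplication by a right-invertible one then turn `[B 0; D A]`
into the block diagonal `diag(B, D, A)`, whose rank is additive. For `C = -C0` this `D` is
`C3 L_B`, and only the zero matrix has rank `0`.
-/

open Matrix

open Module LinearMap
open scoped Quaternion

theorem LinearMap.finrank_range_prodMap {K M₁ M₂ N₁ N₂ : Type*} [DivisionRing K]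
    [AddCommGroup M₁] [Module K M₁] [AddCommGroup M₂] [Module K M₂]
    [AddCommGroup N₁] [Module K N₁] [AddCommGroup N₂] [Module K N₂]
    [Module.Finite K N₁] [Module.Finite K N₂] (f : M₁ →ₗ[K] N₁) (g : M₂ →ₗ[K] N₂) :
    finrank K (range (f.prodMap g)) = finrank K (range f) + finrank K (range g) := by
  have hrange :
      range (f.prodMap g) = range ((range f).subtype.prodMap (range g).subtype) := by
    rw [range_prodMap, range_prodMap, Submodule.range_subtype, Submodule.range_subtype]
  rw [hrange, finrank_range_of_inj
    ((Submodule.injective_subtype _).prodMap (Submodule.injective_subtype _)), finrank_prod]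

theorem Matrix.fromBlocks_one_zero_neg_mul_fromBlocks_one_zero {l n α : Type*} [Fintype l]
    [Fintype n] [DecidableEq l] [DecidableEq n] [Ring α] (X : Matrix n l α) :
    fromBlocks 1 0 (-X) 1 * fromBlocks 1 0 X 1 = (1 : Matrix (l ⊕ n) (l ⊕ n) α) := by
  simp [fromBlocks_multiply, ← fromBlocks_one]

theorem Matrix.vecMulLinear_mul {l m n R : Type*} [Fintype l] [Fintype m] [Semiring R]
    (X : Matrix l m R) (Y : Matrix m n R) :
    (X * Y).vecMulLinear = Y.vecMulLinear ∘ₗ X.vecMulLinear :=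
  LinearMap.ext fun v => (vecMul_vecMul v X Y).symm

theorem qrank_eq_finrank_range {m n : Type*} [Fintype m] (A : Matrix m n ℍ) :
    qrank A = finrank ℍ (range A.vecMulLinear) := by
  rw [range_vecMulLinear]
  rfl

theorem qrank_eq_zero_iff {m n : Type*} [Fintype n] (A : Matrix m n ℍ) :
    qrank A = 0 ↔ A = 0 := by
  rw [qrank, Submodule.finrank_eq_zero, Submodule.span_eq_bot, Set.forall_mem_range]
  exact ⟨fun h => funext h, fun h i => by subst h; rfl⟩

theorem qrank_mul_le_left {l m n : Type*} [Fintype l] [Fintype m] (X : Matrix l m ℍ)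
    (Y : Matrix m n ℍ) : qrank (X * Y) ≤ qrank X := by
  rw [qrank_eq_finrank_range, qrank_eq_finrank_range, vecMulLinear_mul, range_comp]
  exact Submodule.finrank_map_le _ _

theorem qrank_mul_le_right {l m n : Type*} [Fintype l] [Fintype m] (X : Matrix l m ℍ)
    (Y : Matrix m n ℍ) : qrank (X * Y) ≤ qrank Y := by
  rw [qrank_eq_finrank_range, qrank_eq_finrank_range, vecMulLinear_mul]
  exact Submodule.finrank_mono (range_comp_le_range _ _)

theorem qrank_mul_eq_right_of_mul_eq_one {l m n : Type*} [Fintype l] [Fintype m] [DecidableEq m]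
    {P : Matrix l m ℍ} {P' : Matrix m l ℍ} (h : P' * P = 1) (A : Matrix m n ℍ) :
    qrank (P * A) = qrank A :=
  le_antisymm (qrank_mul_le_right P A) <| by
    simpa [← Matrix.mul_assoc, h] using qrank_mul_le_right P' (P * A)

section

variable {l m n k : Type*} [Fintype l] [Fintype m] [Fintype n] [Fintype k]

theorem qrank_mul_eq_left_of_mul_eq_one [DecidableEq m] {Q : Matrix m n ℍ} {Q' : Matrix n m ℍ}
    (h : Q * Q' = 1) (A : Matrix l m ℍ) : qrank (A * Q) = qrank A :=
  le_antisymm (qrank_mul_le_left A Q) <| by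
    simpa [Matrix.mul_assoc, h] using qrank_mul_le_left (A * Q) Q'

theorem qrank_fromBlocks_zero₁₂_zero₂₁ (B : Matrix l m ℍ) (A : Matrix n k ℍ) :
    qrank (fromBlocks B 0 0 A) = qrank B + qrank A := by
  have h : (fromBlocks B 0 0 A).vecMulLinear =
      (LinearEquiv.sumArrowLequivProdArrow m k ℍ ℍ).symm.toLinearMap ∘ₗ
        B.vecMulLinear.prodMap A.vecMulLinear ∘ₗ
          (LinearEquiv.sumArrowLequivProdArrow l n ℍ ℍ).toLinearMap := by
    ext1 v
    rw [vecMulLinear_apply, vecMul_fromBlocks, vecMul_zero, vecMul_zero, add_zero, zero_add]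
    rfl
  rw [qrank_eq_finrank_range, qrank_eq_finrank_range, qrank_eq_finrank_range, h, range_comp,
    range_comp_of_range_eq_top _ (LinearEquiv.range _), LinearEquiv.finrank_map_eq,
    finrank_range_prodMap]

theorem qrank_fromBlocks_add_mul_add_mul [DecidableEq l] [DecidableEq m] [DecidableEq n]
    [DecidableEq k] (B : Matrix l m ℍ) (C : Matrix n m ℍ) (A : Matrix n k ℍ)
    (X : Matrix n l ℍ) (Y : Matrix k m ℍ) :
    qrank (fromBlocks B 0 (C + X * B + A * Y) A) = qrank (fromBlocks B 0 C A) := by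
  have h : fromBlocks B 0 (C + X * B + A * Y) A =
      (fromBlocks 1 0 X 1 : Matrix (l ⊕ n) (l ⊕ n) ℍ) * fromBlocks B 0 C A *
        (fromBlocks 1 0 Y 1 : Matrix (m ⊕ k) (m ⊕ k) ℍ) := by
    simp [fromBlocks_multiply, add_comm]
  rw [h, qrank_mul_eq_left_of_mul_eq_one
      (by simpa using fromBlocks_one_zero_neg_mul_fromBlocks_one_zero (-Y)),
    qrank_mul_eq_right_of_mul_eq_one (fromBlocks_one_zero_neg_mul_fromBlocks_one_zero X)]

theorem qrank_fromRows_of_mul_eq_zero {B : Matrix l m ℍ} {D : Matrix n m ℍ}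
    {B' : Matrix m l ℍ} (hB : B * B' * B = B) (hD : D * B' * B = 0) :
    qrank (fromRows B D) = qrank B + qrank D := by
  classical
  have hQ :
      fromCols (B' * B) (1 - B' * B) * fromRows (1 : Matrix m m ℍ) (1 : Matrix m m ℍ) = 1 := by
    rw [fromCols_mul_fromRows, Matrix.mul_one, Matrix.mul_one, add_sub_cancel]
  have h : fromRows B D * fromCols (B' * B) (1 - B' * B) = fromBlocks B 0 0 D := by
    simp only [fromRows_mul_fromCols, Matrix.mul_sub, Matrix.mul_one, ← Matrix.mul_assoc, hB, hD,
      sub_self, sub_zero]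
  rw [← qrank_mul_eq_left_of_mul_eq_one hQ, h, qrank_fromBlocks_zero₁₂_zero₂₁]

theorem qrank_fromBlocks_zero₁₂_of_mul_eq_zero (B : Matrix l m ℍ) {D : Matrix n m ℍ}
    {A : Matrix n k ℍ} {A' : Matrix k n ℍ} (hA : A * A' * A = A) (hD : A * A' * D = 0) :
    qrank (fromBlocks B 0 D A) = qrank (fromRows B D) + qrank A := by
  classical
  -- `P` sends the rows `[D A]` to `R_A [D A] = [D 0]` and `A A' [D A] = [0 A]`.
  set P : Matrix ((l ⊕ n) ⊕ n) (l ⊕ n) ℍ :=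
    fromRows (fromBlocks 1 0 0 (1 - A * A')) (fromCols 0 (A * A'))
  have hP :
      fromCols (1 : Matrix (l ⊕ n) (l ⊕ n) ℍ) (fromRows 0 (1 : Matrix n n ℍ)) * P = 1 := by
    rw [fromCols_mul_fromRows, Matrix.one_mul, fromRows_mul, Matrix.zero_mul, Matrix.one_mul,
      ← fromBlocks_one]
    ext (i | i) (j | j) <;> simp
  have h : P * fromBlocks B 0 D A = fromBlocks (fromRows B D) 0 0 A := by
    rw [fromRows_mul, fromBlocks_multiply, fromCols_mul_fromBlocks]
    simp only [Matrix.sub_mul, Matrix.one_mul, Matrix.zero_mul, Matrix.mul_zero, hA, hD,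
      add_zero, zero_add, sub_zero, sub_self]
    ext ((i | i) | i) (j | j) <;> rfl
  rw [← qrank_mul_eq_right_of_mul_eq_one hP, h, qrank_fromBlocks_zero₁₂_zero₂₁]

theorem qrank_fromBlocks_zero₁₂ [DecidableEq l] [DecidableEq m] [DecidableEq n] [DecidableEq k]
    {B : Matrix l m ℍ} {B' : Matrix m l ℍ} {A : Matrix n k ℍ} {A' : Matrix k n ℍ}
    (hB : B * B' * B = B) (hA : A * A' * A = A) (C : Matrix n m ℍ) :
    qrank (fromBlocks B 0 C A) = qrank B + qrank A + qrank ((1 - A * A') * C * (1 - B' * B)) := by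
  set D := (1 - A * A') * C * (1 - B' * B)
  have hD : C + -(C * B') * B + A * -(A' * C * (1 - B' * B)) = D := by
    simp only [D, Matrix.sub_mul, Matrix.mul_sub, Matrix.one_mul, Matrix.mul_one, Matrix.neg_mul,
      Matrix.mul_neg, Matrix.mul_assoc]
    abel
  have hAD : A * A' * D = 0 := by
    simp only [D, ← Matrix.mul_assoc, Matrix.mul_sub, Matrix.mul_one, hA, sub_self,
      Matrix.zero_mul]
  have hDB : D * B' * B = 0 := by
    simp only [D, Matrix.mul_assoc, Matrix.sub_mul, Matrix.one_mul, hB, sub_self, Matrix.mul_zero]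
  rw [← qrank_fromBlocks_add_mul_add_mul B C A, hD,
    qrank_fromBlocks_zero₁₂_of_mul_eq_zero B hA hAD, qrank_fromRows_of_mul_eq_zero hB hDB,
    add_right_comm]

end

/-- `C3 L_{B0} = 0` iff
`r [B0 0; -C0 A0] = r B0 + r A0`. -/
theorem stmt3 {n k l m : ℕ}
    (A0 : QM n k) (B0 : QM l m) (C0 : QM n m)
    (A0d : QM k n) (hA0d : IsMP A0 A0d)
    (B0d : QM m l) (hB0d : IsMP B0 B0d)
    (C3 : QM n m) (hC3 : C3 = -((1 - A0 * A0d) * C0)) :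
    C3 * (1 - B0d * B0) = 0 ↔
      qrank (fromBlocks B0 0 (-C0) A0) = qrank B0 + qrank A0 := by
  rw [qrank_fromBlocks_zero₁₂ hB0d.1 hA0d.1, add_eq_left, qrank_eq_zero_iff, hC3,
    Matrix.mul_neg, Matrix.neg_mul]
end

section
/- Let A = A0 + A1ε ∈ DQ^{n×k}, B = B0 + B1ε ∈ DQ^{l×m}, C = C0 + C1ε ∈ DQ^{n×m}. Set A11 = A1·L_{A0}, A2 = R_{A0}·A11, A3 = R_{A0}, C3 = −R_{A0}·C0, B2 = R_{B0}·B1, A4 = R_{A2}·R_{A0}, A5 = −A4·A1·A0†, C4 = A4·(A1·A0†·C0 + C0·B0†·B1 − C1), A6 = R_{A4}·A5, C5 = R_{A4}·C4, B3 = B2·L_{B0}, B4 = C4·L_{B0}. Assume C3·L_{B0} = 0 and B4·L_{B3} = 0. Then for all quaternion matrices W1, ..., W8 of appropriate sizes, the matrices X = X0 + X1ε and Y = Y0 + Y1ε defined by U1 = A6†·C5·B0† + L_{A6}·W5 + W6·R_{B0}, U2 = A4†·B4·B3† + L_{A4}·W7 + W8·R_{B3}, Y0 = A3†·C3·B0†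 + L_{A3}·U1 + U2·R_{B0}, Y1 = A4†·(C4 − A5·U1·B0 − A4·U2·B2)·B0† + L_{A4}·W3 + W4·R_{B0}, W = A2†·A3·[C1 + Y0·B1 + Y1·B0 − A1·A0†·(C0 + Y0·B0)] + L_{A2}·W2, X0 = A0†·(C0 + Y0·B0) + L_{A0}·W, X1 = A0†·[C1 + Y0·B1 + Y1·B0 − A1·A0†·(C0 + Y0·B0) − A11·W] + L_{A0}·W1, satisfy the dual quaternion matrix equation AX − YB = C. -/
open Matrix

/-!
Comparing standard and infinitesimal parts, `A X - Y B = C` says `A0 X0 = C0 + Y0 B0` and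
`A0 X1 = E - A11 W`, where `E = C1 + Y0 B1 + Y1 B0 - A1 A0† (C0 + Y0 B0)`. Each is solved by
Penrose's formula `A0† D + L_{A0} V`, valid once `R_{A0} D = 0`. For `X0` this is `A3 Y0 B0 = C3`,
of which `Y0` is Penrose's general solution (consistent since `C3 L_{B0} = 0`; and `A3† = A3`, as
`A3` is an orthogonal projector). For `X1` it is `A2 W = A3 E`, which `W` solves once `A4 E = 0`.
As `A4 A3 = A4` and `A0† A3 = 0`, the formula for `Y0` turns `A4 E` into
`A4 Y1 B0 - (C4 - A5 U1 B0 - A4 U2 B2)`, which vanishes because `Y1` is the general solution of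
that equation. Its consistency comes from `A4 U2 B3 = B4`, where `U2` is again a general solution,
made consistent by `B4 L_{B3} = 0`.
-/

section GeneralizedInverse

variable {R : Type*} [Ring R] {m n p q : Type*} [Fintype m] [Fintype n]
  {A : Matrix m n R} {Ad : Matrix n m R}

theorem mul_one_sub_gInv_mul_eq_zero [DecidableEq n] (hA : A * Ad * A = A) :
    A * (1 - Ad * A) = 0 := by
  rw [Matrix.mul_sub, Matrix.mul_one, ← Matrix.mul_assoc, hA, sub_self]

theorem one_sub_mul_gInv_mul_eq_zero [DecidableEq m] (hA : A * Ad * A = A) :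
    (1 - A * Ad) * A = 0 := by
  rw [Matrix.sub_mul, Matrix.one_mul, hA, sub_self]

theorem isIdempotentElem_mul_gInv (hA : A * Ad * A = A) : IsIdempotentElem (A * Ad) := by
  rw [IsIdempotentElem, ← Matrix.mul_assoc, hA]

theorem mul_gInv_add_eq [DecidableEq m] [DecidableEq n] {D : Matrix m q R}
    (hA : A * Ad * A = A) (hD : (1 - A * Ad) * D = 0) (V : Matrix n q R) :
    A * (Ad * D + (1 - Ad * A) * V) = D := by
  rw [Matrix.sub_mul, Matrix.one_mul, sub_eq_zero] at hD
  rw [Matrix.mul_add, ← Matrix.mul_assoc, ← Matrix.mul_assoc, mul_one_sub_gInv_mul_eq_zero hA,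
    Matrix.zero_mul, add_zero, hD.symm]

variable [Fintype p] [Fintype q] [DecidableEq n] [DecidableEq p]
  {B : Matrix p q R} {Bd : Matrix q p R} {C : Matrix m q R} {U V : Matrix n p R}

theorem mul_penroseSolution (hA : A * Ad * A = A) :
    A * (Ad * C * Bd + (1 - Ad * A) * U + V * (1 - B * Bd)) =
      A * Ad * C * Bd + A * V * (1 - B * Bd) := by
  rw [Matrix.mul_add, Matrix.mul_add, ← Matrix.mul_assoc A (1 - Ad * A),
    mul_one_sub_gInv_mul_eq_zero hA, Matrix.zero_mul, add_zero]
  simp only [Matrix.mul_assoc]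

theorem penroseSolution_mul_of_gInv_eq_zero {r : Type*} [Fintype r] {M : Matrix r n R}
    (hM : M * Ad = 0) (hB : B * Bd * B = B) :
    M * (Ad * C * Bd + (1 - Ad * A) * U + V * (1 - B * Bd)) * B = M * U * B := by
  have hMA : M * (1 - Ad * A) = M := by
    rw [Matrix.mul_sub, Matrix.mul_one, ← Matrix.mul_assoc, hM, Matrix.zero_mul, sub_zero]
  simp only [Matrix.mul_add, Matrix.add_mul, ← Matrix.mul_assoc, hM, hMA, Matrix.zero_mul,
    zero_add]
  rw [Matrix.mul_assoc (M * V), one_sub_mul_gInv_mul_eq_zero hB, Matrix.mul_zero, add_zero]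

theorem mul_penroseSolution_mul (hA : A * Ad * A = A) (hB : B * Bd * B = B)
    (hC : A * Ad * C * Bd * B = C) :
    A * (Ad * C * Bd + (1 - Ad * A) * U + V * (1 - B * Bd)) * B = C := by
  rw [mul_penroseSolution hA, Matrix.add_mul, Matrix.mul_assoc (A * V),
    one_sub_mul_gInv_mul_eq_zero hB, Matrix.mul_zero, add_zero, hC]

end GeneralizedInverse

theorem IsMP.unique {p q : ℕ} {A : QM p q} {B C : QM q p} (hB : IsMP A B) (hC : IsMP A C) :
    B = C := by
  obtain ⟨hB1, hB2, hB3, hB4⟩ := hB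
  obtain ⟨hC1, hC2, hC3, hC4⟩ := hC
  have hAB : A * B = A * C :=
    calc A * B = (A * C * A * B)ᴴ := by rw [hC1, hB3]
    _ = A * B * (A * C) := by
      rw [Matrix.mul_assoc, conjTranspose_mul, hB3, hC3, Matrix.mul_assoc]
    _ = A * C := by rw [← Matrix.mul_assoc, hB1]
  have hBA : B * A = C * A :=
    calc B * A = (B * A * (C * A))ᴴ := by
          rw [← Matrix.mul_assoc, Matrix.mul_assoc B, Matrix.mul_assoc B, hC1, hB4]
    _ = C * A * (B * A) := by rw [conjTranspose_mul, hB4, hC4]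
    _ = C * A := by rw [Matrix.mul_assoc, ← Matrix.mul_assoc A, hB1]
  calc B = C * A * B := by rw [← hBA, hB2]
  _ = C := by rw [Matrix.mul_assoc, hAB, ← Matrix.mul_assoc, hC2]

theorem IsMP.eq_self_of_isHermitian {p : ℕ} {P Pd : QM p p} (h : IsMP P Pd) (hP : P.IsHermitian)
    (hP' : IsIdempotentElem P) : Pd = P :=
  h.unique ⟨by rw [hP', hP'], by rw [hP', hP'], by rw [hP', hP], by rw [hP', hP]⟩

theorem dm_mul {p q r : ℕ} (A0 A1 : QM p q) (B0 B1 : QM q r) :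
    dm A0 A1 * dm B0 B1 = dm (A0 * B0) (A0 * B1 + A1 * B0) := by
  ext i j <;>
  simp [dm, Matrix.mul_apply, TrivSqZeroExt.fst_sum, TrivSqZeroExt.snd_sum,
    Finset.sum_add_distrib, add_comm]

theorem dm_sub {p q : ℕ} (A0 A1 B0 B1 : QM p q) :
    dm A0 A1 - dm B0 B1 = dm (A0 - B0) (A1 - B1) := by
  ext i j <;> simp [dm]

theorem dm_solution_of_consistent {n k l m : ℕ} {A0 A1 A11 A2 : QM n k} {A0d A2d : QM k n}
    {B0 B1 : QM l m} {C0 C1 : QM n m} {Y0 Y1 : QM n l} {W W1 W2 X0 X1 : QM k m}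
    (hA0 : A0 * A0d * A0 = A0) (hA11 : A11 = A1 * (1 - A0d * A0))
    (hA2 : A2 = (1 - A0 * A0d) * A11) (hA2d : A2 * A2d * A2 = A2)
    (hZ : (1 - A0 * A0d) * (C0 + Y0 * B0) = 0)
    (hE : (1 - A2 * A2d) * (1 - A0 * A0d) *
      (C1 + Y0 * B1 + Y1 * B0 - A1 * A0d * (C0 + Y0 * B0)) = 0)
    (hW : W = A2d * (1 - A0 * A0d) * (C1 + Y0 * B1 + Y1 * B0 - A1 * A0d * (C0 + Y0 * B0))
      + (1 - A2d * A2) * W2)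
    (hX0 : X0 = A0d * (C0 + Y0 * B0) + (1 - A0d * A0) * W)
    (hX1 : X1 = A0d * (C1 + Y0 * B1 + Y1 * B0 - A1 * A0d * (C0 + Y0 * B0) - A11 * W)
      + (1 - A0d * A0) * W1) :
    dm A0 A1 * dm X0 X1 - dm Y0 Y1 * dm B0 B1 = dm C0 C1 := by
  set Z := C0 + Y0 * B0
  set E := C1 + Y0 * B1 + Y1 * B0 - A1 * A0d * Z
  have hA0X0 : A0 * X0 = Z := hX0 ▸ mul_gInv_add_eq hA0 hZ W
  have hA2W : A2 * W = (1 - A0 * A0d) * E := by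
    rw [hW, Matrix.mul_assoc]
    exact mul_gInv_add_eq hA2d (by rw [← Matrix.mul_assoc, hE]) W2
  have hA0X1 : A0 * X1 = E - A11 * W := by
    refine hX1 ▸ mul_gInv_add_eq hA0 ?_ W1
    rw [Matrix.mul_sub, ← Matrix.mul_assoc, ← hA2, hA2W, sub_self]
  have hA1X0 : A1 * X0 = A1 * A0d * Z + A11 * W := by
    rw [hX0, hA11, Matrix.mul_add, Matrix.mul_assoc, Matrix.mul_assoc]
  rw [dm_mul, dm_mul, dm_sub, hA0X0, hA0X1, hA1X0]
  congr 1 <;> simp only [E, Z] <;> abel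

section Consistency

variable {n k l m : ℕ}

theorem A4_mul_Y1_mul_B0_eq {A4 A4d A5 : QM n n} {B0 B2 B3 : QM l m} {B0d B3d : QM m l}
    {C4 B4 : QM n m} {U1 U2 Y1 W3 W4 W7 W8 : QM n l}
    (hA4d : A4 * A4d * A4 = A4) (hB0d : B0 * B0d * B0 = B0) (hB3d : B3 * B3d * B3 = B3)
    (hA5 : A4 * A4d * A5 = A5) (hC4 : A4 * A4d * C4 = C4)
    (hB3 : B3 = B2 * (1 - B0d * B0)) (hB4 : B4 = C4 * (1 - B0d * B0))
    (hcond2 : B4 * (1 - B3d * B3) = 0)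
    (hU2 : U2 = A4d * B4 * B3d + (1 - A4d * A4) * W7 + W8 * (1 - B3 * B3d))
    (hY1 : Y1 = A4d * (C4 - A5 * U1 * B0 - A4 * U2 * B2) * B0d
      + (1 - A4d * A4) * W3 + W4 * (1 - B0 * B0d)) :
    A4 * Y1 * B0 = C4 - A5 * U1 * B0 - A4 * U2 * B2 := by
  rw [Matrix.mul_sub, Matrix.mul_one, sub_eq_zero] at hcond2
  have hU2B3 : A4 * U2 * B3 = B4 := by
    refine hU2 ▸ mul_penroseSolution_mul hA4d hB3d ?_
    rw [Matrix.mul_assoc _ B3d, Matrix.mul_assoc (A4 * A4d), ← hcond2, hB4, ← Matrix.mul_assoc,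
      hC4]
  set K := C4 - A5 * U1 * B0 - A4 * U2 * B2
  have hAK : A4 * A4d * K = K := by
    simp only [K, Matrix.mul_sub, ← Matrix.mul_assoc, hC4, hA5, hA4d]
  have hKB : K * (1 - B0d * B0) = 0 := by
    rw [Matrix.sub_mul, Matrix.sub_mul, ← hB4, Matrix.mul_assoc (A5 * U1),
      mul_one_sub_gInv_mul_eq_zero hB0d, Matrix.mul_zero, sub_zero, Matrix.mul_assoc (A4 * U2),
      ← hB3, hU2B3, sub_self]
  rw [Matrix.mul_sub, Matrix.mul_one, sub_eq_zero] at hKB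
  refine hY1 ▸ mul_penroseSolution_mul hA4d hB0d ?_
  rw [hAK, Matrix.mul_assoc, ← hKB]

theorem A4_mul_residual_eq_zero {A0 A1 A2 : QM n k} {A0d A2d : QM k n} {A4 A4d A5 : QM n n}
    {B0 B1 B2 B3 : QM l m} {B0d B3d : QM m l} {C0 C1 C3 C4 B4 : QM n m}
    {U1 U2 Y0 Y1 W3 W4 W7 W8 : QM n l}
    (hA0 : A0 * A0d * A0 = A0) (hA0d : A0d * A0 * A0d = A0d)
    (hA4 : A4 = (1 - A2 * A2d) * (1 - A0 * A0d)) (hA4d : A4 * A4d * A4 = A4)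
    (hB0d : B0 * B0d * B0 = B0) (hB3d : B3 * B3d * B3 = B3)
    (hC3 : C3 = -((1 - A0 * A0d) * C0)) (hB2 : B2 = (1 - B0 * B0d) * B1)
    (hA5 : A5 = -(A4 * A1 * A0d)) (hC4 : C4 = A4 * (A1 * A0d * C0 + C0 * B0d * B1 - C1))
    (hB3 : B3 = B2 * (1 - B0d * B0)) (hB4 : B4 = C4 * (1 - B0d * B0))
    (hcond2 : B4 * (1 - B3d * B3) = 0)
    (hU2 : U2 = A4d * B4 * B3d + (1 - A4d * A4) * W7 + W8 * (1 - B3 * B3d))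
    (hY0 : Y0 = (1 - A0 * A0d) * C3 * B0d + (1 - (1 - A0 * A0d) * (1 - A0 * A0d)) * U1
      + U2 * (1 - B0 * B0d))
    (hY1 : Y1 = A4d * (C4 - A5 * U1 * B0 - A4 * U2 * B2) * B0d
      + (1 - A4d * A4) * W3 + W4 * (1 - B0 * B0d)) :
    A4 * (C1 + Y0 * B1 + Y1 * B0 - A1 * A0d * (C0 + Y0 * B0)) = 0 := by
  set Q := 1 - A0 * A0d
  have hQ : IsIdempotentElem Q := (isIdempotentElem_mul_gInv hA0).one_sub
  have hA4Q : A4 * Q = A4 := by rw [hA4, Matrix.mul_assoc, hQ.eq]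
  have hA0dQ : A0d * Q = 0 := by
    rw [Matrix.mul_sub, Matrix.mul_one, ← Matrix.mul_assoc, hA0d, sub_self]
  have hA4Y0 : A4 * Y0 = -(A4 * C0 * B0d) + A4 * U2 * (1 - B0 * B0d) := by
    rw [← hA4Q, Matrix.mul_assoc, hY0, mul_penroseSolution (by rw [hQ.eq, hQ.eq]), hQ.eq,
      Matrix.mul_add]
    simp only [← Matrix.mul_assoc, hA4Q, hC3, Matrix.mul_neg, Matrix.neg_mul]
  have hA0dY0B0 : A0d * Y0 * B0 = A0d * U1 * B0 :=
    hY0 ▸ penroseSolution_mul_of_gInv_eq_zero hA0dQ hB0d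
  have hY1B0 : A4 * Y1 * B0 = C4 - A5 * U1 * B0 - A4 * U2 * B2 := by
    refine A4_mul_Y1_mul_B0_eq hA4d hB0d hB3d ?_ ?_ hB3 hB4 hcond2 hU2 hY1
    · rw [hA5, Matrix.mul_neg]
      simp only [← Matrix.mul_assoc, hA4d]
    · rw [hC4, ← Matrix.mul_assoc, hA4d]
  calc _ = A4 * C1 + A4 * Y0 * B1 + A4 * Y1 * B0 - A4 * A1 * A0d * C0
        - A4 * A1 * (A0d * Y0 * B0) := by
        simp only [Matrix.mul_add, Matrix.mul_sub, Matrix.mul_assoc, sub_sub]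
  _ = 0 := by
    rw [hA4Y0, hY1B0, hA0dY0B0, hC4, hA5, hB2]
    simp only [Matrix.add_mul, Matrix.sub_mul, Matrix.mul_add, Matrix.mul_sub, Matrix.neg_mul,
      Matrix.mul_one, Matrix.one_mul, Matrix.mul_assoc]
    abel

end Consistency

theorem stmt5_general {n k l m : ℕ}
    (A0 A1 : QM n k) (B0 B1 : QM l m) (C0 C1 : QM n m)
    (A0d : QM k n) (hA0d : IsMP A0 A0d)
    (B0d : QM m l) (hB0d : IsMP B0 B0d)
    (A11 : QM n k) (hA11 : A11 = A1 * (1 - A0d * A0))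
    (A2 : QM n k) (hA2 : A2 = (1 - A0 * A0d) * A11)
    (A2d : QM k n) (hA2d : IsMP A2 A2d)
    (A3 : QM n n) (hA3 : A3 = 1 - A0 * A0d)
    (A3d : QM n n) (hA3d : IsMP A3 A3d)
    (C3 : QM n m) (hC3 : C3 = -((1 - A0 * A0d) * C0))
    (B2 : QM l m) (hB2 : B2 = (1 - B0 * B0d) * B1)
    (A4 : QM n n) (hA4 : A4 = (1 - A2 * A2d) * (1 - A0 * A0d))
    (A4d : QM n n) (hA4d : IsMP A4 A4d)
    (A5 : QM n n) (hA5 : A5 = -(A4 * A1 * A0d))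
    (C4 : QM n m) (hC4 : C4 = A4 * (A1 * A0d * C0 + C0 * B0d * B1 - C1))
    (B3 : QM l m) (hB3 : B3 = B2 * (1 - B0d * B0))
    (B3d : QM m l) (hB3d : IsMP B3 B3d)
    (B4 : QM n m) (hB4 : B4 = C4 * (1 - B0d * B0))
    (hcond1 : C3 * (1 - B0d * B0) = 0)
    (hcond2 : B4 * (1 - B3d * B3) = 0)
    (W1 W2 : QM k m) (W3 W4 W7 W8 : QM n l)
    (U1 : QM n l)
    (U2 : QM n l) (hU2 : U2 = A4d * B4 * B3d + (1 - A4d * A4) * W7 + W8 * (1 - B3 * B3d))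
    (Y0 : QM n l) (hY0 : Y0 = A3d * C3 * B0d + (1 - A3d * A3) * U1 + U2 * (1 - B0 * B0d))
    (Y1 : QM n l) (hY1 : Y1 = A4d * (C4 - A5 * U1 * B0 - A4 * U2 * B2) * B0d
                          + (1 - A4d * A4) * W3 + W4 * (1 - B0 * B0d))
    (W : QM k m) (hW : W = A2d * A3 * (C1 + Y0 * B1 + Y1 * B0 - A1 * A0d * (C0 + Y0 * B0))
                          + (1 - A2d * A2) * W2)
    (X0 : QM k m) (hX0 : X0 = A0d * (C0 + Y0 * B0) + (1 - A0d * A0) * W)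
    (X1 : QM k m) (hX1 : X1 = A0d * (C1 + Y0 * B1 + Y1 * B0
                          - A1 * A0d * (C0 + Y0 * B0) - A11 * W) + (1 - A0d * A0) * W1) :
    dm A0 A1 * dm X0 X1 - dm Y0 Y1 * dm B0 B1 = dm C0 C1 := by
  obtain ⟨hA0, hA0d, hA0A0d, -⟩ := hA0d
  have hQ : IsIdempotentElem (1 - A0 * A0d) := (isIdempotentElem_mul_gInv hA0).one_sub
  subst hA3
  obtain rfl : A3d = 1 - A0 * A0d :=
    hA3d.eq_self_of_isHermitian (isHermitian_one.sub hA0A0d) hQ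
  have hQC3 : (1 - A0 * A0d) * C3 = C3 := by
    rw [hC3, Matrix.mul_neg, ← Matrix.mul_assoc, hQ.eq]
  rw [Matrix.mul_sub, Matrix.mul_one, sub_eq_zero] at hcond1
  have hY0B0 : (1 - A0 * A0d) * Y0 * B0 = C3 := by
    refine hY0 ▸ mul_penroseSolution_mul (by rw [hQ.eq, hQ.eq]) hB0d.1 ?_
    rw [hQ.eq, hQC3, Matrix.mul_assoc, ← hcond1]
  refine dm_solution_of_consistent hA0 hA11 hA2 hA2d.1 ?_ (hA4 ▸ A4_mul_residual_eq_zero hA0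
    hA0d hA4 hA4d.1 hB0d.1 hB3d.1 hC3 hB2 hA5 hC4 hB3 hB4 hcond2 hU2 hY0 hY1) hW hX0 hX1
  rw [Matrix.mul_add, ← Matrix.mul_assoc, hY0B0, hC3, add_neg_cancel]

/-- under the solvability conditions, the displayed formulas
always produce a solution of `A X - Y B = C`. -/
theorem stmt5 {n k l m : ℕ}
    (A0 A1 : QM n k) (B0 B1 : QM l m) (C0 C1 : QM n m)
    (A0d : QM k n) (hA0d : IsMP A0 A0d)
    (B0d : QM m l) (hB0d : IsMP B0 B0d)
    (A11 : QM n k) (hA11 : A11 = A1 * (1 - A0d * A0))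
    (A2 : QM n k) (hA2 : A2 = (1 - A0 * A0d) * A11)
    (A2d : QM k n) (hA2d : IsMP A2 A2d)
    (A3 : QM n n) (hA3 : A3 = 1 - A0 * A0d)
    (A3d : QM n n) (hA3d : IsMP A3 A3d)
    (C3 : QM n m) (hC3 : C3 = -((1 - A0 * A0d) * C0))
    (B2 : QM l m) (hB2 : B2 = (1 - B0 * B0d) * B1)
    (A4 : QM n n) (hA4 : A4 = (1 - A2 * A2d) * (1 - A0 * A0d))
    (A4d : QM n n) (hA4d : IsMP A4 A4d)
    (A5 : QM n n) (hA5 : A5 = -(A4 * A1 * A0d))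
    (C4 : QM n m) (hC4 : C4 = A4 * (A1 * A0d * C0 + C0 * B0d * B1 - C1))
    (A6 : QM n n) (hA6 : A6 = (1 - A4 * A4d) * A5)
    (A6d : QM n n) (hA6d : IsMP A6 A6d)
    (C5 : QM n m) (hC5 : C5 = (1 - A4 * A4d) * C4)
    (B3 : QM l m) (hB3 : B3 = B2 * (1 - B0d * B0))
    (B3d : QM m l) (hB3d : IsMP B3 B3d)
    (B4 : QM n m) (hB4 : B4 = C4 * (1 - B0d * B0))
    (hcond1 : C3 * (1 - B0d * B0) = 0)
    (hcond2 : B4 * (1 - B3d * B3) = 0)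
    (W1 W2 : QM k m) (W3 W4 W5 W6 W7 W8 : QM n l)
    (U1 : QM n l) (hU1 : U1 = A6d * C5 * B0d + (1 - A6d * A6) * W5 + W6 * (1 - B0 * B0d))
    (U2 : QM n l) (hU2 : U2 = A4d * B4 * B3d + (1 - A4d * A4) * W7 + W8 * (1 - B3 * B3d))
    (Y0 : QM n l) (hY0 : Y0 = A3d * C3 * B0d + (1 - A3d * A3) * U1 + U2 * (1 - B0 * B0d))
    (Y1 : QM n l) (hY1 : Y1 = A4d * (C4 - A5 * U1 * B0 - A4 * U2 * B2) * B0d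
                          + (1 - A4d * A4) * W3 + W4 * (1 - B0 * B0d))
    (W : QM k m) (hW : W = A2d * A3 * (C1 + Y0 * B1 + Y1 * B0 - A1 * A0d * (C0 + Y0 * B0))
                          + (1 - A2d * A2) * W2)
    (X0 : QM k m) (hX0 : X0 = A0d * (C0 + Y0 * B0) + (1 - A0d * A0) * W)
    (X1 : QM k m) (hX1 : X1 = A0d * (C1 + Y0 * B1 + Y1 * B0
                          - A1 * A0d * (C0 + Y0 * B0) - A11 * W) + (1 - A0d * A0) * W1) :
    dm A0 A1 * dm X0 X1 - dm Y0 Y1 * dm B0 B1 = dm C0 C1 :=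
  stmt5_general A0 A1 B0 B1 C0 C1 A0d hA0d B0d hB0d A11 hA11 A2 hA2 A2d hA2d A3 hA3 A3d hA3d C3 hC3
    B2 hB2 A4 hA4 A4d hA4d A5 hA5 C4 hC4 B3 hB3 B3d hB3d B4 hB4 hcond1 hcond2 W1 W2 W3 W4 W7 W8 U1
    U2 hU2 Y0 hY0 Y1 hY1 W hW X0 hX0 X1 hX1
end

section
/- Let A = A0 + A1ε ∈ DQ^{p×q} and B = B0 + B1ε ∈ DQ^{p×r}. Set A2 = A1·L_{A0}, B2 = B1 − A1·A0†·B0, C11 = R_{A0}·B2, and A3 = R_{A0}·A2, and assume R_{A0}·B0 = 0 and R_{A3}·C11 = 0. Then a dual quaternion matrix X = X0 + X1ε ∈ DQ^{q×r} satisfies AX = B if and only if there exist quaternion matrices U1, U2 of appropriate sizes such that, with U = A3†·C11 + L_{A3}·U2, one has X0 = A0†·B0 + L_{A0}·U and X1 = A0†·(B2 − A2·U) + L_{A0}·U1. -/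
open Matrix

/-!
Comparing standard and infinitesimal parts, `A X = B` splits into `A0 X0 = B0` and
`A0 X1 = B1 - A1 X0`. Penrose's description of the solutions of a consistent equation through
an inner inverse gives `X0 = A0† B0 + L_{A0} U`; substituting, the second equation becomes
`A0 X1 = B2 - A2 U`, which is consistent iff `R_{A0} (B2 - A2 U) = C11 - A3 U` vanishes, i.e. iff
`U` solves `A3 U = C11`. Penrose's description, applied to these two equations, gives `X1`
and `U`.
-/

section InnerInverse

variable {R : Type*} [Ring R] {m n k : Type*} [Fintype m] [Fintype n] [DecidableEq m]
  [DecidableEq n]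

/-- Penrose's consistency criterion and general solution, for an inner inverse `G` of `A`. -/
theorem Matrix.mul_eq_iff_sub_mul_eq_zero_and_exists {A : Matrix m n R} {G : Matrix n m R}
    (hG : A * G * A = A) (B : Matrix m k R) (X : Matrix n k R) :
    A * X = B ↔ (1 - A * G) * B = 0 ∧ ∃ U : Matrix n k R, X = G * B + (1 - G * A) * U := by
  constructor
  · rintro rfl
    refine ⟨?_, X, ?_⟩
    · rw [← Matrix.mul_assoc, Matrix.sub_mul, Matrix.one_mul, hG, sub_self, Matrix.zero_mul]
    · rw [Matrix.sub_mul, Matrix.one_mul, Matrix.mul_assoc]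
      abel
  · rintro ⟨hB, U, rfl⟩
    rw [Matrix.sub_mul, Matrix.one_mul, sub_eq_zero, eq_comm] at hB
    rw [Matrix.mul_add, ← Matrix.mul_assoc, hB, ← Matrix.mul_assoc, Matrix.mul_sub,
      Matrix.mul_one, ← Matrix.mul_assoc, hG, sub_self, Matrix.zero_mul, add_zero]

theorem Matrix.mul_eq_iff_exists_of_sub_mul_eq_zero {A : Matrix m n R} {G : Matrix n m R}
    (hG : A * G * A = A) {B : Matrix m k R} (hB : (1 - A * G) * B = 0) (X : Matrix n k R) :
    A * X = B ↔ ∃ U : Matrix n k R, X = G * B + (1 - G * A) * U := by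
  rw [Matrix.mul_eq_iff_sub_mul_eq_zero_and_exists hG, and_iff_right hB]

end InnerInverse

section DualMatrix

variable {p q r : ℕ}

@[simp]
lemma dm_apply_fst (A0 A1 : QM p q) (i j) : (dm A0 A1 i j).fst = A0 i j := by
  simp [dm]

@[simp]
lemma dm_apply_snd (A0 A1 : QM p q) (i j) : (dm A0 A1 i j).snd = A1 i j := by
  simp [dm]

lemma dm_inj {A0 A1 B0 B1 : QM p q} : dm A0 A1 = dm B0 B1 ↔ A0 = B0 ∧ A1 = B1 := by
  refine ⟨fun h => ⟨?_, ?_⟩, fun ⟨h0, h1⟩ => h0 ▸ h1 ▸ rfl⟩ <;>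
    refine Matrix.ext fun i j => ?_
  · rw [← dm_apply_fst A0 A1, h, dm_apply_fst]
  · rw [← dm_apply_snd A0 A1, h, dm_apply_snd]

lemma dm_mul_dm (A0 A1 : QM p q) (X0 X1 : QM q r) :
    dm A0 A1 * dm X0 X1 = dm (A0 * X0) (A0 * X1 + A1 * X0) := by
  refine Matrix.ext fun i j => TrivSqZeroExt.ext ?_ ?_
  · simp [Matrix.mul_apply, TrivSqZeroExt.fst_sum]
  · simp [Matrix.mul_apply, TrivSqZeroExt.snd_sum, Finset.sum_add_distrib]

end DualMatrix

/-- under the solvability conditions, `X = X0 + X1 ε` solves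
`A X = B` iff it has the displayed form. -/
theorem stmt9 {p q r : ℕ}
    (A0 A1 : QM p q) (B0 B1 : QM p r)
    (A0d : QM q p) (hA0d : IsMP A0 A0d)
    (A2 : QM p q) (hA2 : A2 = A1 * (1 - A0d * A0))
    (B2 : QM p r) (hB2 : B2 = B1 - A1 * A0d * B0)
    (C11 : QM p r) (hC11 : C11 = (1 - A0 * A0d) * B2)
    (A3 : QM p q) (hA3 : A3 = (1 - A0 * A0d) * A2)
    (A3d : QM q p) (hA3d : IsMP A3 A3d)
    (hcond1 : (1 - A0 * A0d) * B0 = 0)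
    (hcond2 : (1 - A3 * A3d) * C11 = 0)
    (X0 X1 : QM q r) :
    dm A0 A1 * dm X0 X1 = dm B0 B1 ↔
      ∃ (U1 U2 : QM q r) (U : QM q r),
        U = A3d * C11 + (1 - A3d * A3) * U2 ∧
        X0 = A0d * B0 + (1 - A0d * A0) * U ∧
        X1 = A0d * (B2 - A2 * U) + (1 - A0d * A0) * U1 := by
  obtain ⟨hA0A0d, -⟩ := hA0d
  obtain ⟨hA3A3d, -⟩ := hA3d
  have second_eq_iff : ∀ U : QM q r, A0 * X1 + A1 * (A0d * B0 + (1 - A0d * A0) * U) = B1 ↔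
      (∃ U2 : QM q r, U = A3d * C11 + (1 - A3d * A3) * U2) ∧
        ∃ U1 : QM q r, X1 = A0d * (B2 - A2 * U) + (1 - A0d * A0) * U1 := by
    intro U
    have rhs_eq : B1 - A1 * (A0d * B0 + (1 - A0d * A0) * U) = B2 - A2 * U := by
      rw [hB2, hA2]
      simp only [Matrix.mul_add, Matrix.mul_assoc]
      abel
    have residual_eq : (1 - A0 * A0d) * (B2 - A2 * U) = C11 - A3 * U := by
      rw [Matrix.mul_sub, hC11, hA3, Matrix.mul_assoc]
    rw [← eq_sub_iff_add_eq, rhs_eq, Matrix.mul_eq_iff_sub_mul_eq_zero_and_exists hA0A0d,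
      residual_eq, sub_eq_zero, eq_comm, Matrix.mul_eq_iff_exists_of_sub_mul_eq_zero hA3A3d hcond2]
  rw [dm_mul_dm, dm_inj, Matrix.mul_eq_iff_exists_of_sub_mul_eq_zero hA0A0d hcond1]
  constructor
  · rintro ⟨⟨U, rfl⟩, h⟩
    obtain ⟨⟨U2, hU⟩, U1, hX1⟩ := (second_eq_iff U).mp h
    exact ⟨U1, U2, U, hU, rfl, hX1⟩
  · rintro ⟨U1, U2, U, hU, rfl, hX1⟩
    exact ⟨⟨U, rfl⟩, (second_eq_iff U).mpr ⟨⟨U2, hU⟩, U1, hX1⟩⟩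
end

section
/- Let A0 ∈ ℍ^{p×q}, A1 ∈ ℍ^{p×q₁}, B0 ∈ ℍ^{s×t}, B1 ∈ ℍ^{s₁×t}, C ∈ ℍ^{p×t} be quaternion matrices. Set A = R_{A0}·A1, A2 = R_{A0}·C, B2 = B0·L_{B1}, B3 = C·L_{B1}. Then there exist quaternion matrices X0 ∈ ℍ^{q×s}, X1 ∈ ℍ^{q×s₁}, X2 ∈ ℍ^{q₁×s₁} with A0·X0·B0 + A0·X1·B1 + A1·X2·B1 = C if and only if R_A·A2 = 0, R_{A0}·B3 = 0, and B3·L_{B2} = 0. -/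
/-!
For an inner inverse `A⁻` of `A` (`A A⁻ A = A`, e.g. `A†`), `A X = M` is solvable iff
`(1 - A A⁻) M = 0`, and `A X B = M` iff moreover `M (1 - B⁻ B) = 0`. Multiplying the
equation by `L_{B1}` on the right leaves `A0 X0 B2 = B3`; once `X0` solves this, the remainder
`(C - A0 X0 B0) B1†` has to be written as `A0 X1 + A1 X2`, which projecting by `R_{A0}` reduces to
`A X2 = A2 B1†`.
-/

open Matrix

namespace Matrix

variable {R : Type*} [Ring R] {m n k l o : Type*}
  [Fintype m] [Fintype n] [Fintype k] [Fintype l]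

theorem sub_mul_mul_self_eq_zero [DecidableEq m] {A : Matrix m n R} {G : Matrix n m R}
    (hG : A * G * A = A) : (1 - A * G) * A = 0 := by
  rw [Matrix.sub_mul, Matrix.one_mul, hG, sub_self]

theorem mul_sub_mul_self_eq_zero [DecidableEq n] {A : Matrix m n R} {G : Matrix n m R}
    (hG : A * G * A = A) : A * (1 - G * A) = 0 := by
  rw [Matrix.mul_sub, Matrix.mul_one, ← Matrix.mul_assoc, hG, sub_self]

theorem exists_mul_eq_iff_of_mul_mul_self [DecidableEq m] {A : Matrix m n R} {G : Matrix n m R}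
    (hG : A * G * A = A) (M : Matrix m o R) :
    (∃ X : Matrix n o R, A * X = M) ↔ (1 - A * G) * M = 0 := by
  constructor
  · rintro ⟨X, rfl⟩
    rw [← Matrix.mul_assoc, sub_mul_mul_self_eq_zero hG, Matrix.zero_mul]
  · intro h
    rw [Matrix.sub_mul, Matrix.one_mul, sub_eq_zero] at h
    exact ⟨G * M, by rw [← Matrix.mul_assoc, ← h]⟩

theorem exists_mul_eq_iff_of_mul_mul_self' [DecidableEq n] {B : Matrix m n R}
    {H : Matrix n m R} (hH : B * H * B = B) (M : Matrix o n R) :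
    (∃ Y : Matrix o m R, Y * B = M) ↔ M * (1 - H * B) = 0 := by
  constructor
  · rintro ⟨Y, rfl⟩
    rw [Matrix.mul_assoc, mul_sub_mul_self_eq_zero hH, Matrix.mul_zero]
  · intro h
    rw [Matrix.mul_sub, Matrix.mul_one, sub_eq_zero] at h
    exact ⟨M * H, by rw [Matrix.mul_assoc, ← h]⟩

theorem exists_mul_mul_eq_iff_of_mul_mul_self [DecidableEq m] [DecidableEq l]
    {A : Matrix m n R} {G : Matrix n m R} {B : Matrix k l R} {H : Matrix l k R}
    (hG : A * G * A = A) (hH : B * H * B = B) (M : Matrix m l R) :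
    (∃ X : Matrix n k R, A * X * B = M) ↔ (1 - A * G) * M = 0 ∧ M * (1 - H * B) = 0 := by
  rw [← exists_mul_eq_iff_of_mul_mul_self hG, ← exists_mul_eq_iff_of_mul_mul_self' hH]
  constructor
  · rintro ⟨X, rfl⟩
    exact ⟨⟨X * B, (Matrix.mul_assoc A X B).symm⟩, ⟨A * X, rfl⟩⟩
  · rintro ⟨⟨X, hX⟩, ⟨Y, hY⟩⟩
    have hGM : A * G * M = M := by rw [← hX, ← Matrix.mul_assoc, hG]
    have hMH : M * H * B = M := by
      rw [← hY, Matrix.mul_assoc Y B H, Matrix.mul_assoc Y, hH]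
    refine ⟨G * M * H, ?_⟩
    rw [show A * (G * M * H) * B = A * G * M * H * B by simp only [Matrix.mul_assoc], hGM, hMH]

theorem exists_mul_add_mul_eq_iff_of_mul_mul_self [DecidableEq m] {A0 : Matrix m n R}
    {A0d : Matrix n m R} {A1 A : Matrix m k R} {Ad : Matrix k m R} (hA0d : A0 * A0d * A0 = A0)
    (hA : A = (1 - A0 * A0d) * A1) (hAd : A * Ad * A = A) (D : Matrix m o R) :
    (∃ (X1 : Matrix n o R) (X2 : Matrix k o R), A0 * X1 + A1 * X2 = D) ↔
      (1 - A * Ad) * ((1 - A0 * A0d) * D) = 0 := by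
  have hproj (X1 : Matrix n o R) (X2 : Matrix k o R) :
      (1 - A0 * A0d) * (A0 * X1 + A1 * X2) = A * X2 := by
    rw [Matrix.mul_add, ← Matrix.mul_assoc, sub_mul_mul_self_eq_zero hA0d, Matrix.zero_mul,
      zero_add, hA, Matrix.mul_assoc]
  rw [← exists_mul_eq_iff_of_mul_mul_self hAd]
  constructor
  · rintro ⟨X1, X2, rfl⟩
    exact ⟨X2, (hproj X1 X2).symm⟩
  · rintro ⟨X2, hX2⟩
    obtain ⟨X1, hX1⟩ : ∃ X1 : Matrix n o R, A0 * X1 = D - A1 * X2 := by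
      rw [exists_mul_eq_iff_of_mul_mul_self hA0d, Matrix.mul_sub, ← hX2, ← Matrix.mul_assoc,
        ← hA, sub_self]
    exact ⟨X1, X2, by rw [hX1, sub_add_cancel]⟩

end Matrix

/-- solvability of the quaternion matrix equation
`A0 X0 B0 + A0 X1 B1 + A1 X2 B1 = C`. -/
theorem stmt10 {p q q₁ s s₁ t : ℕ}
    (A0 : QM p q) (A1 : QM p q₁) (B0 : QM s t) (B1 : QM s₁ t) (C : QM p t)
    (A0d : QM q p) (hA0d : IsMP A0 A0d)
    (B1d : QM t s₁) (hB1d : IsMP B1 B1d)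
    (A : QM p q₁) (hA : A = (1 - A0 * A0d) * A1)
    (Ad : QM q₁ p) (hAd : IsMP A Ad)
    (A2 : QM p t) (hA2 : A2 = (1 - A0 * A0d) * C)
    (B2 : QM s t) (hB2 : B2 = B0 * (1 - B1d * B1))
    (B2d : QM t s) (hB2d : IsMP B2 B2d)
    (B3 : QM p t) (hB3 : B3 = C * (1 - B1d * B1)) :
    (∃ (X0 : QM q s) (X1 : QM q s₁) (X2 : QM q₁ s₁),
        A0 * X0 * B0 + A0 * X1 * B1 + A1 * X2 * B1 = C) ↔
      ((1 - A * Ad) * A2 = 0 ∧ (1 - A0 * A0d) * B3 = 0 ∧ B3 * (1 - B2d * B2) = 0) := by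
  have hRA0 := sub_mul_mul_self_eq_zero hA0d.1
  have hLB1 := mul_sub_mul_self_eq_zero hB1d.1
  rw [← exists_mul_mul_eq_iff_of_mul_mul_self hA0d.1 hB2d.1,
    ← exists_mul_eq_iff_of_mul_mul_self hAd.1]
  constructor
  · rintro ⟨X0, X1, X2, rfl⟩
    refine ⟨⟨X2 * B1, ?_⟩, X0, ?_⟩
    · simp only [hA2, hA, Matrix.mul_add, ← Matrix.mul_assoc, hRA0, Matrix.zero_mul, zero_add]
    · simp only [hB3, hB2, Matrix.add_mul, Matrix.mul_assoc, hLB1, Matrix.mul_zero, add_zero]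
  · rintro ⟨⟨Y, hY⟩, X0, hX0⟩
    set E := C - A0 * X0 * B0
    have hE : E * B1d * B1 = E := by
      have hEL : E * (1 - B1d * B1) = 0 := by
        rw [Matrix.sub_mul, ← hB3, Matrix.mul_assoc, ← hB2, hX0, sub_self]
      rw [Matrix.mul_sub, Matrix.mul_one, sub_eq_zero] at hEL
      rw [Matrix.mul_assoc, ← hEL]
    have hRE : (1 - A0 * A0d) * (E * B1d) = A2 * B1d := by
      rw [hA2, ← Matrix.mul_assoc, Matrix.mul_sub, Matrix.sub_mul]
      simp only [← Matrix.mul_assoc, hRA0, Matrix.zero_mul, sub_zero]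
    obtain ⟨X1, X2, hX⟩ := (exists_mul_add_mul_eq_iff_of_mul_mul_self hA0d.1 hA hAd.1 _).2
      (by rw [hRE, ← hY, ← Matrix.mul_assoc, ← Matrix.mul_assoc,
        sub_mul_mul_self_eq_zero hAd.1, Matrix.zero_mul, Matrix.zero_mul])
    refine ⟨X0, X1, X2, ?_⟩
    calc A0 * X0 * B0 + A0 * X1 * B1 + A1 * X2 * B1
        = A0 * X0 * B0 + (A0 * X1 + A1 * X2) * B1 := by rw [add_assoc, Matrix.add_mul]
      _ = C := by rw [hX, hE, add_sub_cancel]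
end

section
/- Let A0 ∈ ℍ^{p×q}, A1 ∈ ℍ^{p×q₁}, B0 ∈ ℍ^{s×t}, B1 ∈ ℍ^{s₁×t}, C ∈ ℍ^{p×t} be quaternion matrices. Then there exist quaternion matrices X0 ∈ ℍ^{q×s}, X1 ∈ ℍ^{q×s₁}, X2 ∈ ℍ^{q₁×s₁} with A0·X0·B0 + A0·X1·B1 + A1·X2·B1 = C if and only if the three rank equalities hold: r[A0 A1 C] = r[A0 A1], r[B1 0; C A0] = r(B1) + r(A0), and r[C; B0; B1] = r[B0; B1], where the displayed matrices are block matrices with the indicated blocks and zero blocks of compatible sizes. -/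
open Matrix

/-!
Read a matrix `M` through `v ↦ v ᵥ* M`: its range is the row space `rs M`, its kernel the left
kernel `lk M`. Over a division ring, `r [A C] = r A` says `lk A ≤ lk C`, i.e. `C = A Y`, and
`r [C; B] = r B` says `rs C ≤ rs B`, i.e. `C = Z B`. The row space of `[B1 0; C A0]` projects
onto `rs A0` with kernel `rs B1 + (lk A0) C`, so its rank is `r B1 + r A0` exactly when
`(lk A0) C ≤ rs B1`, which is the solvability of `A0 X + Y B1 = C`.

These three one-sided equations suffice: with inner inverses `A0 G A0 = A0`, `B1 H B1 = B1`,
any solution of `A0 X + Y B1 = C` gives `C = A0 G C + C H B1 - A0 G C H B1`; substituting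
`C = Z0 B0 + Z1 B1` in the first and `C = A0 Y0 + A1 Y1` in the second term exhibits the
solution `X0 = G Z0`, `X1 = G Z1 + Y0 H - G C H`, `X2 = Y1 H`.
-/

open Module Submodule

theorem Submodule.finrank_sup_eq_finrank_right_iff {K V : Type*} [DivisionRing K] [AddCommGroup V]
    [Module K V] {P Q : Submodule K V} [FiniteDimensional K ↥(P ⊔ Q)] :
    finrank K ↥(P ⊔ Q) = finrank K Q ↔ P ≤ Q := by
  refine ⟨fun h => ?_, fun h => by rw [sup_eq_right.mpr h]⟩
  rw [eq_of_le_of_finrank_eq le_sup_right h.symm]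
  exact le_sup_left

namespace LinearMap

variable {K V W U S : Type*} [DivisionRing K]
  [AddCommGroup V] [Module K V] [AddCommGroup W] [Module K W]
  [AddCommGroup U] [Module K U] [AddCommGroup S] [Module K S]

theorem exists_comp_eq_of_ker_le {f : V →ₗ[K] W} {g : V →ₗ[K] U} (h : ker f ≤ ker g) :
    ∃ x : W →ₗ[K] U, x ∘ₗ f = g := by
  obtain ⟨x, hx⟩ := exists_extend ((ker f).liftQ g h ∘ₗ f.quotKerEquivRange.symm.toLinearMap)
  refine ⟨x, ext fun v => ?_⟩
  have hv : f.quotKerEquivRange.symm (f.rangeRestrict v) = (ker f).mkQ v :=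
    quotKerEquivRange_symm_apply_image f v (mem_range_self f v)
  simpa [hv] using congr($hx (f.rangeRestrict v))

theorem exists_comp_eq_of_range_le {h : S →ₗ[K] U} {k : V →ₗ[K] U} (hr : range k ≤ range h) :
    ∃ y : V →ₗ[K] S, h ∘ₗ y = k := by
  obtain ⟨y, hy⟩ := Module.projective_lifting_property h.rangeRestrict
    (k.codRestrict (range h) fun v => hr (mem_range_self k v)) h.surjective_rangeRestrict
  exact ⟨y, ext fun v => congr_arg Subtype.val congr($hy v)⟩

theorem exists_comp_comp_eq_self (f : V →ₗ[K] W) : ∃ g : W →ₗ[K] V, f ∘ₗ g ∘ₗ f = f := by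
  obtain ⟨s, hs⟩ := exists_comp_eq_of_range_le (h := f) (Submodule.range_subtype (range f)).le
  obtain ⟨g, hg⟩ := exists_extend s
  refine ⟨g, ext fun v => ?_⟩
  calc f (g (f v)) = f (s (f.rangeRestrict v)) := congr_arg f congr($hg (f.rangeRestrict v))
    _ = f v := congr($hs (f.rangeRestrict v))

theorem map_ker_le_range_iff {f : V →ₗ[K] W} {g : V →ₗ[K] U} {h : S →ₗ[K] U} :
    Submodule.map g (ker f) ≤ range h ↔
      ∃ (x : W →ₗ[K] U) (y : V →ₗ[K] S), x ∘ₗ f + h ∘ₗ y = g := by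
  constructor
  · intro hg
    obtain ⟨x', hx'⟩ := exists_comp_eq_of_ker_le (f := f) (g := (range h).mkQ ∘ₗ g) fun v hv => by
      simpa using hg (mem_map_of_mem hv)
    obtain ⟨x, hx⟩ := Module.projective_lifting_property (range h).mkQ x' (range h).mkQ_surjective
    obtain ⟨y, hy⟩ := exists_comp_eq_of_range_le (h := h) (k := g - x ∘ₗ f) <| by
      rintro _ ⟨v, rfl⟩
      have hxf := congr($hx (f v))
      have hgv := congr($hx' v)
      simp only [coe_comp, Function.comp_apply, mkQ_apply] at hxf hgv
      rw [← Submodule.Quotient.mk_eq_zero, sub_apply, comp_apply, Submodule.Quotient.mk_sub,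
        hxf, hgv, sub_self]
    exact ⟨x, y, by rw [hy]; abel⟩
  · rintro ⟨x, y, rfl⟩ _ ⟨v, hv, rfl⟩
    simp [mem_ker.mp hv]

theorem finrank_range_prod [FiniteDimensional K V] (f : V →ₗ[K] W) (g : V →ₗ[K] U) :
    finrank K (range (f.prod g)) = finrank K (range f) + finrank K (Submodule.map g (ker f)) := by
  have hprod := (f.prod g).finrank_range_add_finrank_ker
  have hf := f.finrank_range_add_finrank_ker
  have hg := (g.domRestrict (ker f)).finrank_range_add_finrank_ker
  rw [ker_prod] at hprod
  rw [range_domRestrict, ker_domRestrict, ← (ker f).finrank_map_subtype_eq,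
    map_comap_subtype] at hg
  omega

theorem finrank_range_prod_eq_iff [FiniteDimensional K V] (f : V →ₗ[K] W) (g : V →ₗ[K] U) :
    finrank K (range (f.prod g)) = finrank K (range f) ↔ ker f ≤ ker g := by
  rw [finrank_range_prod, Nat.add_eq_left, Submodule.finrank_eq_zero, le_ker_iff_map]

theorem finrank_range_comp_snd_prod_coprod [FiniteDimensional K S] [FiniteDimensional K V]
    (f : V →ₗ[K] W) (g : V →ₗ[K] U) (h : S →ₗ[K] U) :
    finrank K (range ((f ∘ₗ snd K S V).prod (h.coprod g)))
      = finrank K (range f) + finrank K ↥(range h ⊔ Submodule.map g (ker f)) := by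
  rw [finrank_range_prod, range_comp_of_range_eq_top _ range_snd, ker_comp, comap_snd,
    map_coprod_prod, Submodule.map_top]

theorem finrank_range_comp_snd_prod_coprod_eq_iff [FiniteDimensional K S] [FiniteDimensional K V]
    (f : V →ₗ[K] W) (g : V →ₗ[K] U) (h : S →ₗ[K] U) :
    finrank K (range ((f ∘ₗ snd K S V).prod (h.coprod g)))
      = finrank K (range f) + finrank K (range h) ↔ Submodule.map g (ker f) ≤ range h := by
  rw [finrank_range_comp_snd_prod_coprod, Nat.add_left_cancel_iff, sup_comm,
    finrank_sup_eq_finrank_right_iff]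

theorem finrank_range_equiv_comp_comp {V' W' : Type*} [AddCommGroup V'] [Module K V']
    [AddCommGroup W'] [Module K W'] (e : W ≃ₗ[K] W') (F : V →ₗ[K] W) (e' : V' ≃ₗ[K] V) :
    finrank K (range (e.toLinearMap ∘ₗ F ∘ₗ e'.toLinearMap)) = finrank K (range F) := by
  rw [range_comp, range_comp_of_range_eq_top _ e'.range, LinearEquiv.finrank_map_eq]

end LinearMap

namespace Matrix

section Semiring

variable {R : Type*} [Semiring R] {l m n : Type*} [Fintype m]

theorem vecMulLinear_add (A B : Matrix m n R) :
    (A + B).vecMulLinear = A.vecMulLinear + B.vecMulLinear :=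
  LinearMap.ext fun x => vecMul_add A B x

theorem vecMulLinear_mul_s11 [Fintype l] (A : Matrix l m R) (B : Matrix m n R) :
    (A * B).vecMulLinear = B.vecMulLinear ∘ₗ A.vecMulLinear :=
  LinearMap.ext fun x => (vecMul_vecMul x A B).symm

theorem vecMulLinear_injective : Function.Injective (vecMulLinear : Matrix m n R → _) := by
  classical exact toLinearMapRight'.injective

theorem exists_vecMulLinear_eq (f : (m → R) →ₗ[R] n → R) :
    ∃ M : Matrix m n R, M.vecMulLinear = f := by
  classical exact toLinearMapRight'.surjective f

end Semiring

variable {K : Type*} [DivisionRing K] {l m n o q q₁ s s₁ t : Type*} [Fintype m]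

noncomputable def rowRank (A : Matrix m n K) : ℕ := finrank K (LinearMap.range A.vecMulLinear)

theorem exists_mul_eq_iff_ker_le [Fintype n] {A : Matrix m n K} {C : Matrix m o K} :
    (∃ Y : Matrix n o K, A * Y = C) ↔
      LinearMap.ker A.vecMulLinear ≤ LinearMap.ker C.vecMulLinear := by
  refine ⟨?_, fun h => ?_⟩
  · rintro ⟨Y, rfl⟩
    rw [vecMulLinear_mul_s11]
    exact LinearMap.ker_le_ker_comp _ _
  · obtain ⟨x, hx⟩ := LinearMap.exists_comp_eq_of_ker_le h
    obtain ⟨Y, rfl⟩ := exists_vecMulLinear_eq x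
    exact ⟨Y, vecMulLinear_injective (by rw [vecMulLinear_mul_s11]; exact hx)⟩

theorem exists_mul_eq_iff_range_le [Fintype l] {B : Matrix m n K} {C : Matrix l n K} :
    (∃ Z : Matrix l m K, Z * B = C) ↔
      LinearMap.range C.vecMulLinear ≤ LinearMap.range B.vecMulLinear := by
  refine ⟨?_, fun h => ?_⟩
  · rintro ⟨Z, rfl⟩
    rw [vecMulLinear_mul_s11]
    exact LinearMap.range_comp_le_range _ _
  · obtain ⟨y, hy⟩ := LinearMap.exists_comp_eq_of_range_le h
    obtain ⟨Z, rfl⟩ := exists_vecMulLinear_eq y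
    exact ⟨Z, vecMulLinear_injective (by rw [vecMulLinear_mul_s11]; exact hy)⟩

theorem exists_mul_add_mul_eq_iff [Fintype l] [Fintype n] {A : Matrix m n K}
    {B : Matrix l o K} {C : Matrix m o K} :
    (∃ (X : Matrix n o K) (Y : Matrix m l K), A * X + Y * B = C) ↔
      Submodule.map C.vecMulLinear (LinearMap.ker A.vecMulLinear) ≤
        LinearMap.range B.vecMulLinear := by
  rw [LinearMap.map_ker_le_range_iff]
  refine ⟨?_, ?_⟩
  · rintro ⟨X, Y, rfl⟩
    exact ⟨X.vecMulLinear, Y.vecMulLinear, by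
      rw [vecMulLinear_add, vecMulLinear_mul_s11, vecMulLinear_mul_s11]⟩
  · rintro ⟨x, y, hxy⟩
    obtain ⟨X, rfl⟩ := exists_vecMulLinear_eq x
    obtain ⟨Y, rfl⟩ := exists_vecMulLinear_eq y
    refine ⟨X, Y, vecMulLinear_injective ?_⟩
    rw [vecMulLinear_add, vecMulLinear_mul_s11, vecMulLinear_mul_s11, hxy]

theorem exists_mul_mul_eq_self [Fintype n] (A : Matrix m n K) :
    ∃ G : Matrix n m K, A * G * A = A := by
  obtain ⟨g, hg⟩ := A.vecMulLinear.exists_comp_comp_eq_self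
  obtain ⟨G, rfl⟩ := exists_vecMulLinear_eq g
  exact ⟨G, vecMulLinear_injective (by rw [vecMulLinear_mul_s11, vecMulLinear_mul_s11]; exact hg)⟩

theorem rowRank_fromCols_eq_iff [Fintype n] (A : Matrix m n K) (C : Matrix m o K) :
    (fromCols A C).rowRank = A.rowRank ↔ ∃ Y : Matrix n o K, A * Y = C := by
  have h : (fromCols A C).vecMulLinear =
      (LinearEquiv.sumArrowLequivProdArrow n o K K).symm.toLinearMap ∘ₗ
        A.vecMulLinear.prod C.vecMulLinear := by
    ext x : 1; ext (j | j) <;> rfl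
  rw [rowRank, rowRank, h, LinearMap.range_comp, LinearEquiv.finrank_map_eq,
    LinearMap.finrank_range_prod_eq_iff, exists_mul_eq_iff_ker_le]

theorem rowRank_fromRows_eq_iff [Fintype l] (C : Matrix l n K) (B : Matrix m n K) :
    (fromRows C B).rowRank = B.rowRank ↔ ∃ Z : Matrix l m K, Z * B = C := by
  have h : (fromRows C B).vecMulLinear = C.vecMulLinear.coprod B.vecMulLinear
      ∘ₗ (LinearEquiv.sumArrowLequivProdArrow l m K K).toLinearMap := by
    ext x : 1
    exact vecMul_fromRows C B x
  rw [rowRank, rowRank, h, LinearMap.range_comp_of_range_eq_top _ (LinearEquiv.range _),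
    LinearMap.range_coprod, Submodule.finrank_sup_eq_finrank_right_iff,
    exists_mul_eq_iff_range_le]

theorem rowRank_fromBlocks_zero₁₂_eq_iff [Fintype l] [Fintype n] (B : Matrix l o K)
    (C : Matrix m o K) (A : Matrix m n K) :
    (fromBlocks B 0 C A).rowRank = B.rowRank + A.rowRank ↔
      ∃ (X : Matrix n o K) (Y : Matrix m l K), A * X + Y * B = C := by
  have h : (fromBlocks B 0 C A).vecMulLinear =
      ((LinearEquiv.prodComm K (n → K) (o → K)).trans
        (LinearEquiv.sumArrowLequivProdArrow o n K K).symm).toLinearMap ∘ₗ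
      ((A.vecMulLinear ∘ₗ LinearMap.snd K (l → K) (m → K)).prod
        (B.vecMulLinear.coprod C.vecMulLinear)) ∘ₗ
      (LinearEquiv.sumArrowLequivProdArrow l m K K).toLinearMap := by
    ext x : 1; ext (j | j) <;> simp [vecMul_fromBlocks] <;> rfl
  rw [rowRank, rowRank, rowRank, h, LinearMap.finrank_range_equiv_comp_comp, add_comm,
    LinearMap.finrank_range_comp_snd_prod_coprod_eq_iff, exists_mul_add_mul_eq_iff]

theorem exists_solution_iff_exists_partial_solutions [Fintype q] [Fintype q₁] [Fintype s]
    [Fintype s₁] [Fintype t]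
    (A0 : Matrix m q K) (A1 : Matrix m q₁ K) (B0 : Matrix s t K) (B1 : Matrix s₁ t K)
    (C : Matrix m t K) :
    (∃ (X0 : Matrix q s K) (X1 : Matrix q s₁ K) (X2 : Matrix q₁ s₁ K),
        A0 * X0 * B0 + A0 * X1 * B1 + A1 * X2 * B1 = C) ↔
      (∃ Y : Matrix (q ⊕ q₁) t K, fromCols A0 A1 * Y = C) ∧
      (∃ (X : Matrix q t K) (Y : Matrix m s₁ K), A0 * X + Y * B1 = C) ∧
      (∃ Z : Matrix m (s ⊕ s₁) K, Z * fromRows B0 B1 = C) := by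
  constructor
  · rintro ⟨X0, X1, X2, rfl⟩
    refine ⟨⟨fromRows (X0 * B0 + X1 * B1) (X2 * B1), ?_⟩, ⟨X0 * B0 + X1 * B1, A1 * X2, ?_⟩,
      ⟨fromCols (A0 * X0) (A0 * X1 + A1 * X2), ?_⟩⟩
    · simp only [fromCols_mul_fromRows, Matrix.mul_add, Matrix.mul_assoc]
    · simp only [Matrix.mul_add, Matrix.mul_assoc]
    · simp only [fromCols_mul_fromRows, Matrix.add_mul, Matrix.mul_assoc]
      abel
  · rintro ⟨⟨Y, hY⟩, ⟨X, Y', hXY⟩, ⟨Z, hZ⟩⟩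
    rw [← fromRows_toRows Y, fromCols_mul_fromRows] at hY
    rw [← fromCols_toCols Z, fromCols_mul_fromRows] at hZ
    obtain ⟨G, hG⟩ := A0.exists_mul_mul_eq_self
    obtain ⟨H, hH⟩ := B1.exists_mul_mul_eq_self
    have hG' (M : Matrix q t K) : A0 * (G * (A0 * M)) = A0 * M := by
      rw [← Matrix.mul_assoc, ← Matrix.mul_assoc, hG]
    have hH' : B1 * (H * B1) = B1 := by rw [← Matrix.mul_assoc, hH]
    have key : A0 * G * C + C * H * B1 - A0 * G * C * H * B1 = C := by
      rw [← hXY]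
      simp only [Matrix.mul_add, Matrix.add_mul, Matrix.mul_assoc, hG', hH']
      abel
    refine ⟨G * Z.toCols₁, G * Z.toCols₂ + Y.toRows₁ * H - G * C * H, Y.toRows₂ * H, ?_⟩
    calc _ = A0 * G * (Z.toCols₁ * B0 + Z.toCols₂ * B1)
          + (A0 * Y.toRows₁ + A1 * Y.toRows₂) * H * B1 - A0 * G * C * H * B1 := by
          simp only [Matrix.mul_add, Matrix.add_mul, Matrix.mul_sub, Matrix.sub_mul,
            Matrix.mul_assoc]
          abel
      _ = C := by rw [hZ, hY, key]

end Matrix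

theorem qrank_eq_rowRank {m n : Type*} [Fintype m] (A : Matrix m n (Quaternion ℝ)) :
    qrank A = A.rowRank := by
  rw [rowRank, range_vecMulLinear]
  rfl

/-- solvability of `A0 X0 B0 + A0 X1 B1 + A1 X2 B1 = C` in terms
of three rank equalities. -/
theorem stmt11 {p q q₁ s s₁ t : ℕ}
    (A0 : QM p q) (A1 : QM p q₁) (B0 : QM s t) (B1 : QM s₁ t) (C : QM p t) :
    (∃ (X0 : QM q s) (X1 : QM q s₁) (X2 : QM q₁ s₁),
        A0 * X0 * B0 + A0 * X1 * B1 + A1 * X2 * B1 = C) ↔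
      (qrank (fromCols (fromCols A0 A1) C) = qrank (fromCols A0 A1) ∧
       qrank (fromBlocks B1 0 C A0) = qrank B1 + qrank A0 ∧
       qrank (fromRows C (fromRows B0 B1)) = qrank (fromRows B0 B1)) := by
  simp only [qrank_eq_rowRank]
  rw [rowRank_fromCols_eq_iff, rowRank_fromBlocks_zero₁₂_eq_iff, rowRank_fromRows_eq_iff]
  exact exists_solution_iff_exists_partial_solutions A0 A1 B0 B1 C
end

section
/- Let A0 ∈ ℍ^{p×q}, A1 ∈ ℍ^{p×q₁}, B0 ∈ ℍ^{s×t}, B1 ∈ ℍ^{s₁×t}, C ∈ ℍ^{p×t} be quaternion matrices. Set A = R_{A0}·A1, A2 = R_{A0}·C, B2 = B0·L_{B1}, B3 = C·L_{B1}, and assume R_A·A2 = 0, R_{A0}·B3 = 0, and B3·L_{B2} = 0. Then quaternion matrices X0 ∈ ℍ^{q×s}, X1 ∈ ℍ^{q×s₁}, X2 ∈ ℍ^{q₁×s₁} satisfy A0·X0·B0 + A0·X1·B1 + A1·X2·B1 = C if and only if there exist quaternion matrices U1, ..., U6 of appropriate sizes such that X0 = A0†·B3·B2† + L_{A0}·U5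 + U6·R_{B2}, X2 = A†·A2·B1† + L_A·U3 + U4·R_{B1}, and X1 = A0†·(C − A0·X0·B0 − A1·X2·B1)·B1† + L_{A0}·U1 + U2·R_{B1}. -/
open Matrix

/-! The equation is equivalent to `A0 X1 B1 = E` with `E := C - A0 X0 B0 - A1 X2 B1`. Multiplying by
`R_{A0}` on the left and by `L_{B1}` on the right turns `R_{A0} E = 0` and `E L_{B1} = 0` into
the one-sided equations `A X2 B1 = A2` and `A0 X0 B2 = B3`. Each of the three equations
`P X Q = D` is then solved by Penrose's theorem, which needs only inner inverses and the
consistency conditions `R_P D = 0 = D L_Q`; for `E` these are exactly the two one-sided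
equations, and for the other two they are the hypotheses. -/

section GeneralizedInverse

variable {α : Type*} [Ring α] {m n k l : Type*} [Fintype m] [Fintype n] [Fintype k] [Fintype l]

theorem Matrix.mul_one_sub_mul_eq_zero_of_mul_mul_eq [DecidableEq n]
    {A : Matrix m n α} {G : Matrix n m α}
    (hA : A * G * A = A) : A * (1 - G * A) = 0 := by
  rw [Matrix.mul_sub, Matrix.mul_one, ← Matrix.mul_assoc, hA, sub_self]

theorem Matrix.one_sub_mul_mul_eq_zero_of_mul_mul_eq [DecidableEq m]
    {A : Matrix m n α} {G : Matrix n m α}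
    (hA : A * G * A = A) : (1 - A * G) * A = 0 := by
  rw [Matrix.sub_mul, Matrix.one_mul, hA, sub_self]

theorem Matrix.mul_mul_eq_iff_exists_eq_add [DecidableEq m] [DecidableEq n] [DecidableEq k]
    [DecidableEq l] {A : Matrix m n α} {G : Matrix n m α}
    {B : Matrix k l α} {H : Matrix l k α} {C : Matrix m l α}
    (hA : A * G * A = A) (hB : B * H * B = B)
    (hAC : (1 - A * G) * C = 0) (hCB : C * (1 - H * B) = 0) (X : Matrix n k α) :
    A * X * B = C ↔
      ∃ U V : Matrix n k α, X = G * C * H + (1 - G * A) * U + V * (1 - B * H) := by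
  constructor
  · rintro rfl
    -- X = G A X B H + (1 - G A) X + G A X (1 - B H)
    refine ⟨X, G * A * X, ?_⟩
    simp only [Matrix.mul_sub, Matrix.sub_mul, Matrix.mul_one, Matrix.one_mul, Matrix.mul_assoc]
    abel
  · rintro ⟨U, V, rfl⟩
    have hAGC : A * G * C = C := by
      rw [Matrix.sub_mul, Matrix.one_mul, sub_eq_zero] at hAC
      exact hAC.symm
    have hCHB : C * H * B = C := by
      rw [Matrix.mul_sub, Matrix.mul_one, sub_eq_zero, ← Matrix.mul_assoc] at hCB
      exact hCB.symm
    have hU : A * ((1 - G * A) * U) * B = 0 := by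
      rw [← Matrix.mul_assoc, mul_one_sub_mul_eq_zero_of_mul_mul_eq hA, Matrix.zero_mul,
        Matrix.zero_mul]
    have hV : A * (V * (1 - B * H)) * B = 0 := by
      rw [Matrix.mul_assoc, Matrix.mul_assoc, one_sub_mul_mul_eq_zero_of_mul_mul_eq hB,
        Matrix.mul_zero, Matrix.mul_zero]
    rw [Matrix.mul_add, Matrix.mul_add, Matrix.add_mul, Matrix.add_mul, hU, hV, add_zero, add_zero]
    simp only [← Matrix.mul_assoc]
    rw [hAGC, hCHB]

end GeneralizedInverse

/-- under the solvability conditions, `(X0, X1, X2)` solves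
`A0 X0 B0 + A0 X1 B1 + A1 X2 B1 = C` iff it has the displayed form. -/
theorem stmt12 {p q q₁ s s₁ t : ℕ}
    (A0 : QM p q) (A1 : QM p q₁) (B0 : QM s t) (B1 : QM s₁ t) (C : QM p t)
    (A0d : QM q p) (hA0d : IsMP A0 A0d)
    (B1d : QM t s₁) (hB1d : IsMP B1 B1d)
    (A : QM p q₁) (hA : A = (1 - A0 * A0d) * A1)
    (Ad : QM q₁ p) (hAd : IsMP A Ad)
    (A2 : QM p t) (hA2 : A2 = (1 - A0 * A0d) * C)
    (B2 : QM s t) (hB2 : B2 = B0 * (1 - B1d * B1))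
    (B2d : QM t s) (hB2d : IsMP B2 B2d)
    (B3 : QM p t) (hB3 : B3 = C * (1 - B1d * B1))
    (hcond1 : (1 - A * Ad) * A2 = 0)
    (hcond2 : (1 - A0 * A0d) * B3 = 0)
    (hcond3 : B3 * (1 - B2d * B2) = 0)
    (X0 : QM q s) (X1 : QM q s₁) (X2 : QM q₁ s₁) :
    A0 * X0 * B0 + A0 * X1 * B1 + A1 * X2 * B1 = C ↔
      ∃ (U1 U2 : QM q s₁) (U3 U4 : QM q₁ s₁) (U5 U6 : QM q s),
        X0 = A0d * B3 * B2d + (1 - A0d * A0) * U5 + U6 * (1 - B2 * B2d) ∧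
        X2 = Ad * A2 * B1d + (1 - Ad * A) * U3 + U4 * (1 - B1 * B1d) ∧
        X1 = A0d * (C - A0 * X0 * B0 - A1 * X2 * B1) * B1d
              + (1 - A0d * A0) * U1 + U2 * (1 - B1 * B1d) := by
  set E := C - A0 * X0 * B0 - A1 * X2 * B1 with hE
  have hRA0 := one_sub_mul_mul_eq_zero_of_mul_mul_eq hA0d.1
  have hLB1 := mul_one_sub_mul_eq_zero_of_mul_mul_eq hB1d.1
  have hRE : (1 - A0 * A0d) * E = A2 - A * X2 * B1 := by
    simp only [hE, hA, hA2, Matrix.mul_sub, ← Matrix.mul_assoc, hRA0, Matrix.zero_mul, sub_zero]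
  have hEL : E * (1 - B1d * B1) = B3 - A0 * X0 * B2 := by
    simp only [hE, hB2, hB3, Matrix.sub_mul, Matrix.mul_assoc, hLB1, Matrix.mul_zero, sub_zero]
  have hA2L : A2 * (1 - B1d * B1) = 0 := by rw [hA2, Matrix.mul_assoc, ← hB3, hcond2]
  have solve0 := mul_mul_eq_iff_exists_eq_add hA0d.1 hB2d.1 hcond2 hcond3 X0
  have solve2 := mul_mul_eq_iff_exists_eq_add hAd.1 hB1d.1 hcond1 hA2L X2
  have hsystem : A0 * X0 * B0 + A0 * X1 * B1 + A1 * X2 * B1 = C ↔ A0 * X1 * B1 = E := by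
    rw [hE, sub_sub, eq_sub_iff_add_eq, ← add_assoc, add_comm (A0 * X1 * B1)]
  rw [hsystem]
  constructor
  · intro hX1
    have hRE0 : (1 - A0 * A0d) * E = 0 := by
      rw [← hX1, ← Matrix.mul_assoc, ← Matrix.mul_assoc, hRA0, Matrix.zero_mul,
        Matrix.zero_mul]
    have hEL0 : E * (1 - B1d * B1) = 0 := by rw [← hX1, Matrix.mul_assoc, hLB1, Matrix.mul_zero]
    obtain ⟨U5, U6, hX0⟩ := solve0.mp (sub_eq_zero.mp (hEL ▸ hEL0)).symm
    obtain ⟨U3, U4, hX2⟩ := solve2.mp (sub_eq_zero.mp (hRE ▸ hRE0)).symm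
    obtain ⟨U1, U2, hX1'⟩ := (mul_mul_eq_iff_exists_eq_add hA0d.1 hB1d.1 hRE0 hEL0 X1).mp hX1
    exact ⟨U1, U2, U3, U4, U5, U6, hX0, hX2, hX1'⟩
  · rintro ⟨U1, U2, U3, U4, U5, U6, hX0, hX2, hX1⟩
    have hRE0 : (1 - A0 * A0d) * E = 0 := by rw [hRE, solve2.mpr ⟨U3, U4, hX2⟩, sub_self]
    have hEL0 : E * (1 - B1d * B1) = 0 := by rw [hEL, solve0.mpr ⟨U5, U6, hX0⟩, sub_self]
    exact (mul_mul_eq_iff_exists_eq_add hA0d.1 hB1d.1 hRE0 hEL0 X1).mpr ⟨U1, U2, hX1⟩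
end
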